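/- arXiv:2003.01372 — 6 statements merged into one kernel-verified Lean document; each statement's English description precedes it below -/
import Mathlib

section
/- Let N ≥ 3 be an integer, b a real number with 1 < b ≤ 2, and R > 0. Then for all real numbers r, s with R ≤ s ≤ r ≤ bR, and any natural number m ≥ 1, one has 1 - (s/r)^(N-2) ≥ ((N-2)/b^(N-2)) · ((r-s)/s)^m. -/
lemma aux_geom (k : ℕ) (t : ℝ) (ht0 : 0 ≤ t) (ht1 : t ≤ 1) :
    (k : ℝ) * t ^ (k - 1) * (1 - t) ≤ 1 - t ^ k := by
  have hgeom : (1 : ℝ) - t ^ k = (∑ i ∈ Finset.range k, t ^ i) * (1 - t) := by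
    have := geom_sum_mul t k
    linarith [this]
  have hsum : (k : ℝ) * t ^ (k - 1) ≤ ∑ i ∈ Finset.range k, t ^ i := by
    have : ∑ _i ∈ Finset.range k, t ^ (k - 1) ≤ ∑ i ∈ Finset.range k, t ^ i := by
      apply Finset.sum_le_sum
      intro i hi
      have hik := Finset.mem_range.mp hi
      exact pow_le_pow_of_le_one ht0 ht1 (by omega)
    simpa using this
  rw [hgeom]
  exact mul_le_mul_of_nonneg_right hsum (by linarith)

theorem stmt_1 (N : ℕ) (hN : 3 ≤ N) (b R : ℝ) (hb1 : 1 < b) (hb2 : b ≤ 2) (hR : 0 < R)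
    (r s : ℝ) (hRs : R ≤ s) (hsr : s ≤ r) (hrbR : r ≤ b * R) (m : ℕ) (hm : 1 ≤ m) :
    1 - (s / r) ^ (N - 2) ≥ ((N : ℝ) - 2) / b ^ (N - 2) * ((r - s) / s) ^ m := by
  set k := N - 2 with hk
  have hk1 : 1 ≤ k := by omega
  have hs : 0 < s := lt_of_lt_of_le hR hRs
  have hr : 0 < r := hs.trans_le hsr
  have hb0 : 0 < b := by linarith
  have hkc : ((N : ℝ) - 2) = (k : ℝ) := by
    rw [hk]; push_cast [Nat.cast_sub (by omega : 2 ≤ N)]; ring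
  have hrbs : r ≤ b * s := le_trans hrbR (mul_le_mul_of_nonneg_left hRs hb0.le)
  have hx0 : 0 ≤ (r - s) / s := div_nonneg (by linarith) hs.le
  have hx1 : (r - s) / s ≤ 1 := by
    rw [div_le_one hs]
    nlinarith
  have hxm : ((r - s) / s) ^ m ≤ (r - s) / s := by
    calc ((r - s) / s) ^ m ≤ ((r - s) / s) ^ 1 := pow_le_pow_of_le_one hx0 hx1 hm
    _ = (r - s) / s := pow_one _
  have ht0 : 0 ≤ s / r := div_nonneg hs.le hr.le
  have ht1 : s / r ≤ 1 := by rw [div_le_one hr]; exact hsr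
  have htb : 1 / b ≤ s / r := by
    rw [div_le_div_iff₀ hb0 hr]
    linarith
  have hbk : (0 : ℝ) < b ^ k := by positivity
  have hbk1 : (0 : ℝ) < b ^ (k - 1) := by positivity
  have key : (k : ℝ) * (1 / b) ^ (k - 1) * ((r - s) / r) ≤ 1 - (s / r) ^ k := by
    have h1 := aux_geom k (s / r) ht0 ht1
    have h2 : (1 / b) ^ (k - 1) ≤ (s / r) ^ (k - 1) :=
      pow_le_pow_left₀ (by positivity) htb _
    have h3 : (k : ℝ) * (1 / b) ^ (k - 1) * (1 - s / r) ≤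
        (k : ℝ) * (s / r) ^ (k - 1) * (1 - s / r) :=
      mul_le_mul_of_nonneg_right
        (mul_le_mul_of_nonneg_left h2 (Nat.cast_nonneg k)) (by linarith)
    have heq : 1 - s / r = (r - s) / r := by field_simp
    rw [← heq]
    linarith
  have step : (k : ℝ) / b ^ k * ((r - s) / s) ≤
      (k : ℝ) * (1 / b) ^ (k - 1) * ((r - s) / r) := by
    have e1 : (k : ℝ) / b ^ k * ((r - s) / s) = ((k : ℝ) * (r - s)) / (b ^ k * s) := by
      ring
    have e2 : (k : ℝ) * (1 / b) ^ (k - 1) * ((r - s) / r)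
        = ((k : ℝ) * (r - s)) / (b ^ (k - 1) * r) := by
      rw [one_div, inv_pow]; ring
    rw [e1, e2]
    apply div_le_div_of_nonneg_left (mul_nonneg (Nat.cast_nonneg k) (by linarith)) (by positivity)
    calc b ^ (k - 1) * r ≤ b ^ (k - 1) * (b * s) :=
          mul_le_mul_of_nonneg_left hrbs hbk1.le
    _ = b ^ k * s := by
        rw [show b ^ k = b ^ (k - 1) * b from by
          rw [← pow_succ, Nat.sub_add_cancel hk1]]
        ring
  have hC : (0 : ℝ) ≤ (k : ℝ) / b ^ k := by positivity
  rw [hkc]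
  calc ((k : ℝ) / b ^ k) * ((r - s) / s) ^ m
      ≤ ((k : ℝ) / b ^ k) * ((r - s) / s) := mul_le_mul_of_nonneg_left hxm hC
    _ ≤ (k : ℝ) * (1 / b) ^ (k - 1) * ((r - s) / r) := step
    _ ≤ 1 - (s / r) ^ k := key
end

section
/- Let m, n ≥ 1 be natural numbers, α ≥ 1, β ≥ 1 with αβ > 1, and let Q, W : [A, B] → ℝ be nonnegative continuous functions with A < B. Suppose z : [A, B] → ℝ is C^1, nondecreasing, with z(A) > 0, and satisfies (z'(r))^((m+1)β + n + 1) ≥ W(r) · (z(r))^((α+m+1)β + n) for all r in [A, B]. Then z(A)^((αβ-1)/((m+1)β+n+1)) · ∫_A^B W(r)^(1/((m+1)β+n+1)) dr ≤ ((m+1)β+n+1)/(αβ-1). -/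
/-!
Taking `p`-th roots, with `p = (m+1)β + n + 1`, turns the differential inequality into
`W^(1/p) z^(1+c) ≤ z'` with `c = (αβ - 1)/p > 0`. Dividing by `z^(1+c)` makes the right-hand
side the derivative of `-z^(-c)/c`, so integrating over `[A, B]` gives
`∫ W^(1/p) ≤ (z(A)^(-c) - z(B)^(-c))/c ≤ z(A)^(-c)/c`.
-/

open Set MeasureTheory

lemma Real.rpow_one_div_mul_rpow_div_le {w y d p q : ℝ} (hw : 0 ≤ w) (hy : 0 ≤ y)
    (hd : 0 ≤ d) (hp : 0 < p) (h : w * y ^ q ≤ d ^ p) : w ^ (1 / p) * y ^ (q / p) ≤ d := by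
  have hwy : 0 ≤ w * y ^ q := mul_nonneg hw (Real.rpow_nonneg hy q)
  calc w ^ (1 / p) * y ^ (q / p) = (w * y ^ q) ^ p⁻¹ := by
        rw [Real.mul_rpow hw (Real.rpow_nonneg hy q), ← Real.rpow_mul hy, one_div, div_eq_mul_inv]
    _ ≤ d := (Real.rpow_inv_le_iff_of_pos hwy hd hp).2 h

lemma MonotoneOn.deriv_nonneg_of_mem_interior {g : ℝ → ℝ} {s : Set ℝ} {x : ℝ}
    (hg : MonotoneOn g s) (hx : x ∈ interior s) : 0 ≤ deriv g x := by
  rw [← derivWithin_of_mem_nhds (mem_interior_iff_mem_nhds.1 hx)]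
  exact hg.derivWithin_nonneg

lemma integral_le_rpow_neg_sub_div_of_mul_rpow_le_deriv {z φ : ℝ → ℝ} {A B c : ℝ}
    (hAB : A ≤ B) (hc : 0 < c) (hzc : ContinuousOn z (Icc A B))
    (hzpos : ∀ r ∈ Icc A B, 0 < z r)
    (hzd : ∀ r ∈ Ioo A B, DifferentiableAt ℝ z r) (hφ : IntegrableOn φ (Icc A B))
    (hle : ∀ r ∈ Ioo A B, φ r * z r ^ (1 + c) ≤ deriv z r) :
    ∫ r in A..B, φ r ≤ (z A ^ (-c) - z B ^ (-c)) / c := by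
  have hcont : ContinuousOn (fun r ↦ -z r ^ (-c) / c) (Icc A B) :=
    ((hzc.rpow_const fun r hr ↦ Or.inl (hzpos r hr).ne').neg).div_const c
  have hderiv : ∀ r ∈ Ioo A B,
      HasDerivWithinAt (fun r ↦ -z r ^ (-c) / c) (deriv z r * z r ^ (-c - 1)) (Ioi r) r := by
    intro r hr
    have h := (((hzd r hr).hasDerivAt.rpow_const (p := -c)
      (Or.inl (hzpos r (Ioo_subset_Icc_self hr)).ne')).neg.div_const c).hasDerivWithinAt
      (s := Ioi r)
    rwa [show -(deriv z r * -c * z r ^ (-c - 1)) / c = deriv z r * z r ^ (-c - 1) by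
      field_simp] at h
  have hφle : ∀ r ∈ Ioo A B, φ r ≤ deriv z r * z r ^ (-c - 1) := by
    intro r hr
    have hzr := hzpos r (Ioo_subset_Icc_self hr)
    have hinv : z r ^ (1 + c) * z r ^ (-c - 1) = 1 := by
      rw [← Real.rpow_add hzr, show 1 + c + (-c - 1) = 0 by ring, Real.rpow_zero]
    calc φ r = φ r * z r ^ (1 + c) * z r ^ (-c - 1) := by rw [mul_assoc, hinv, mul_one]
      _ ≤ deriv z r * z r ^ (-c - 1) :=
        mul_le_mul_of_nonneg_right (hle r hr) (Real.rpow_nonneg hzr.le _)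
  calc ∫ r in A..B, φ r ≤ -z B ^ (-c) / c - -z A ^ (-c) / c :=
        intervalIntegral.integral_le_sub_of_hasDeriv_right_of_le hAB hcont hderiv hφ hφle
    _ = (z A ^ (-c) - z B ^ (-c)) / c := by ring

theorem stmt_3_general (m n : ℕ) (α β : ℝ) (hβ : 1 ≤ β)
    (hαβ : 1 < α * β) (A B : ℝ) (hAB : A < B) (W : ℝ → ℝ)
    (hW0 : ∀ r ∈ Set.Icc A B, 0 ≤ W r) (hWc : ContinuousOn W (Set.Icc A B))
    (z : ℝ → ℝ) (hz : ContDiffOn ℝ 1 z (Set.Icc A B)) (hzmono : MonotoneOn z (Set.Icc A B))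
    (hzA : 0 < z A)
    (hineq : ∀ r ∈ Set.Icc A B,
      deriv z r ^ (((m : ℝ) + 1) * β + n + 1) ≥ W r * z r ^ (((α + m + 1) * β + n : ℝ))) :
    z A ^ ((α * β - 1) / ((m + 1) * β + n + 1)) *
      ∫ r in A..B, W r ^ ((1 : ℝ) / ((m + 1) * β + n + 1)) ≤
    ((m + 1) * β + n + 1) / (α * β - 1) := by
  set p : ℝ := (m + 1) * β + n + 1
  set c : ℝ := (α * β - 1) / p
  have hp : 0 < p := by positivity
  have hc : 0 < c := div_pos (by linarith) hp
  have hzpos : ∀ r ∈ Icc A B, 0 < z r := fun r hr ↦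
    hzA.trans_le (hzmono (left_mem_Icc.2 hAB.le) hr hr.1)
  have hzd : ∀ r ∈ Ioo A B, DifferentiableAt ℝ z r := fun r hr ↦
    (hz.differentiableOn one_ne_zero r (Ioo_subset_Icc_self hr)).differentiableAt
      (Icc_mem_nhds hr.1 hr.2)
  have hle : ∀ r ∈ Ioo A B, W r ^ (1 / p) * z r ^ (1 + c) ≤ deriv z r := by
    intro r hr
    have hr' := Ioo_subset_Icc_self hr
    have hexp : 1 + c = ((α + m + 1) * β + n) / p := by
      rw [eq_div_iff hp.ne', add_mul, div_mul_cancel₀ _ hp.ne']; ring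
    rw [hexp]
    exact Real.rpow_one_div_mul_rpow_div_le (hW0 r hr') (hzpos r hr').le
      (hzmono.deriv_nonneg_of_mem_interior (by rwa [interior_Icc])) hp (hineq r hr')
  have hint := integral_le_rpow_neg_sub_div_of_mul_rpow_le_deriv hAB.le hc hz.continuousOn hzpos
    hzd ((hWc.rpow_const fun r _ ↦ Or.inr (by positivity)).integrableOn_Icc) hle
  have hzB : 0 ≤ z B ^ (-c) := Real.rpow_nonneg (hzpos B (right_mem_Icc.2 hAB.le)).le _
  calc z A ^ c * ∫ r in A..B, W r ^ (1 / p)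
      ≤ z A ^ c * (z A ^ (-c) / c) := by gcongr; exact hint.trans (by gcongr; linarith)
    _ = p / (α * β - 1) := by
      rw [mul_div_assoc', ← Real.rpow_add hzA, add_neg_cancel, Real.rpow_zero, one_div_div]

theorem stmt_3 (m n : ℕ) (hm : 1 ≤ m) (hn : 1 ≤ n) (α β : ℝ) (hα : 1 ≤ α) (hβ : 1 ≤ β)
    (hαβ : 1 < α * β) (A B : ℝ) (hAB : A < B) (Q W : ℝ → ℝ)
    (hQ0 : ∀ r ∈ Set.Icc A B, 0 ≤ Q r) (hQc : ContinuousOn Q (Set.Icc A B))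
    (hW0 : ∀ r ∈ Set.Icc A B, 0 ≤ W r) (hWc : ContinuousOn W (Set.Icc A B))
    (z : ℝ → ℝ) (hz : ContDiffOn ℝ 1 z (Set.Icc A B)) (hzmono : MonotoneOn z (Set.Icc A B))
    (hzA : 0 < z A)
    (hineq : ∀ r ∈ Set.Icc A B,
      deriv z r ^ (((m : ℝ) + 1) * β + n + 1) ≥ W r * z r ^ (((α + m + 1) * β + n : ℝ))) :
    z A ^ ((α * β - 1) / ((m + 1) * β + n + 1)) *
      ∫ r in A..B, W r ^ ((1 : ℝ) / ((m + 1) * β + n + 1)) ≤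
    ((m + 1) * β + n + 1) / (α * β - 1) :=
  stmt_3_general m n α β hβ hαβ A B hAB W hW0 hWc z hz hzmono hzA hineq
end

section
/- Let m, n ∈ ℕ with m, n ≥ 1, b > 1, α > 0, β > 0 with αβ > 1, R > 0, and let P, Q : [R, bR] → ℝ be nonnegative nonincreasing continuous functions and h, g : [R, bR] → ℝ nonnegative continuous functions satisfying h(r) ≥ ∫_R^r (r-s)^m P(s) g(s)^α ds and g(r) ≥ ∫_R^r (r-s)^n Q(s) h(s)^β ds for all r in [R, bR]. Define z(r) = ∫_R^r (r-s)^n Q(s) h(s)^β ds. Then there exists a constant C_z > 0, depending only on m, n, α, β, b (and not on R, P, Q, h, g), such that for every A in (R, bR) with z(A) > 0, z(A)^((αβ-1)/((m+1)β+n+1)) · ∫_A^(bR) (Q(r) P(r)^β)^(1/((m+1)β+n+1)) dr ≤ C_z. -/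
/-!
Write `z r = ∫_R^r (r - s)^n Q(s) h(s)^β ds`. On `[a, ρ]` the inequalities `g ≥ z ≥ z(a)` and the
monotonicity of `P` give `h(s) ≥ (s - a)^(m+1) P(s) z(a)^α / (m + 1)`, hence
`z(ρ) ≥ z(a)^(αβ) (m + 1)^(-β) ∫_a^ρ (s - a)^((m+1)β) (ρ - s)^n Q P^β`. Hölder's inequality
against this weight, whose conjugate power has a Beta-type integral independent of `a` and `ρ`,
turns it into `∫_a^ρ (Q P^β)^(1/D) ≤ C (z(ρ) / z(a)^(αβ))^(1/D)` with `D = (m + 1)β + n + 1`.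
Cutting `[A, bR]` at the points where `z` doubles, these increments form a geometric series
because `αβ > 1`.
-/

open MeasureTheory Set intervalIntegral

/-- `n!` times the `(n + 1)`-fold iterated integral of `F` from `R` (Cauchy's formula). -/
noncomputable def repeatedIntegral (n : ℕ) (R : ℝ) (F : ℝ → ℝ) (r : ℝ) : ℝ :=
  ∫ s in R..r, (r - s) ^ n * F s

section repeatedIntegral

variable {n : ℕ} {R T : ℝ} {F : ℝ → ℝ}

lemma intervalIntegrable_sub_left_pow_mul (hF : ContinuousOn F (Icc R T)) (w : ℝ) {u v : ℝ}
    (hu : u ∈ Icc R T) (hv : v ∈ Icc R T) :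
    IntervalIntegrable (fun s => (w - s) ^ n * F s) volume u v :=
  ((((continuousOn_const.sub continuousOn_id).pow n).mul hF).mono
    (uIcc_subset_Icc hu hv)).intervalIntegrable

lemma integral_le_repeatedIntegral (hF : ContinuousOn F (Icc R T))
    (hF0 : ∀ s ∈ Icc R T, 0 ≤ F s) {a b r : ℝ} (ha : R ≤ a) (hab : a ≤ b) (hbr : b ≤ r)
    (hr : r ≤ T) : ∫ s in a..b, (r - s) ^ n * F s ≤ repeatedIntegral n R F r :=
  integral_mono_interval ha hab hbr
    (ae_restrict_of_forall_mem measurableSet_Ioc fun s hs =>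
      mul_nonneg (pow_nonneg (sub_nonneg.2 hs.2) n) (hF0 s ⟨hs.1.le, hs.2.trans hr⟩))
    (intervalIntegrable_sub_left_pow_mul hF r
      (left_mem_Icc.2 (ha.trans (hab.trans (hbr.trans hr)))) ⟨ha.trans (hab.trans hbr), hr⟩)

lemma monotoneOn_repeatedIntegral (hF : ContinuousOn F (Icc R T))
    (hF0 : ∀ s ∈ Icc R T, 0 ≤ F s) : MonotoneOn (repeatedIntegral n R F) (Icc R T) := by
  intro u hu v hv huv
  have hR : R ∈ Icc R T := left_mem_Icc.2 (hu.1.trans hu.2)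
  calc repeatedIntegral n R F u ≤ ∫ s in R..u, (v - s) ^ n * F s :=
        integral_mono_on hu.1 (intervalIntegrable_sub_left_pow_mul hF u hR hu)
          (intervalIntegrable_sub_left_pow_mul hF v hR hu) fun s hs =>
          mul_le_mul_of_nonneg_right (pow_le_pow_left₀ (sub_nonneg.2 hs.2) (by linarith) n)
            (hF0 s ⟨hs.1, hs.2.trans hu.2⟩)
    _ ≤ repeatedIntegral n R F v := integral_le_repeatedIntegral hF hF0 le_rfl hu.1 huv hv.2

lemma continuousOn_repeatedIntegral (hF : ContinuousOn F (Icc R T)) :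
    ContinuousOn (repeatedIntegral n R F) (Icc R T) := by
  rcases lt_or_ge T R with hTR | hRT
  · simp [Icc_eq_empty_of_lt hTR]
  -- a continuous extension `G` of `F` has the same integrals over subintervals of `[R, T]`
  set G := IccExtend hRT ((Icc R T).domRestrict F)
  have hG : Continuous (Function.uncurry fun r s => (r - s) ^ n * G s) :=
    (continuous_fst.sub continuous_snd).pow n |>.mul
      (hF.domRestrict.Icc_extend'.comp continuous_snd)
  refine (continuous_parametric_intervalIntegral_of_continuous (a₀ := R) hG continuous_id
    ).continuousOn.congr fun r hr => integral_congr fun s hs => ?_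
  have hs' : s ∈ Icc R T := uIcc_subset_Icc (left_mem_Icc.2 hRT) hr hs
  simp [G, IccExtend_of_mem hRT _ hs']

end repeatedIntegral

lemma integral_sub_left_pow (m : ℕ) (a s : ℝ) :
    ∫ σ in a..s, (s - σ) ^ m = (s - a) ^ (m + 1) / (m + 1) := by
  simp [integral_comp_sub_left (fun x => x ^ m)]

lemma mul_le_integral_sub_left_pow_mul_of_antitoneOn {m : ℕ} {P G : ℝ → ℝ} {a s c : ℝ}
    (has : a ≤ s) (hP : AntitoneOn P (Icc a s)) (hP0 : 0 ≤ P s) (hc : 0 ≤ c)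
    (hG : ∀ σ ∈ Icc a s, c ≤ G σ)
    (hint : IntervalIntegrable (fun σ => (s - σ) ^ m * (P σ * G σ)) volume a s) :
    (s - a) ^ (m + 1) / (m + 1) * (P s * c) ≤ ∫ σ in a..s, (s - σ) ^ m * (P σ * G σ) := by
  rw [← integral_sub_left_pow, ← intervalIntegral.integral_mul_const]
  refine integral_mono_on has (Continuous.intervalIntegrable (by fun_prop) _ _) hint
    fun σ hσ => ?_
  have hPσ : P s ≤ P σ := hP hσ (right_mem_Icc.2 has) hσ.2
  exact mul_le_mul_of_nonneg_left (mul_le_mul hPσ (hG σ hσ) hc (hP0.trans hPσ))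
    (pow_nonneg (sub_nonneg.2 hσ.2) m)

/-- Multiply by `(x + y) / (x + y)` and bound `x ^ (1 - c₁) = x ^ c₂` by `(x + y) ^ c₂`. -/
lemma rpow_neg_mul_rpow_neg_le {x y c₁ c₂ : ℝ} (hx : 0 < x) (hy : 0 < y) (hc₁ : 0 ≤ c₁)
    (hc₂ : 0 ≤ c₂) (hc : c₁ + c₂ = 1) :
    x ^ (-c₁) * y ^ (-c₂) ≤ (x + y) ^ (-c₁) * y ^ (-c₂) + (x + y) ^ (-c₂) * x ^ (-c₁) := by
  have hxy : 0 < x + y := by linarith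
  have hx' : x * x ^ (-c₁) = x ^ c₂ := by
    rw [show c₂ = 1 + -c₁ by linarith, Real.rpow_add hx, Real.rpow_one]
  have hy' : y * y ^ (-c₂) = y ^ c₁ := by
    rw [show c₁ = 1 + -c₂ by linarith, Real.rpow_add hy, Real.rpow_one]
  have hL₁ : (x + y) ^ (-c₁) = (x + y) ^ c₂ / (x + y) := by
    rw [eq_div_iff hxy.ne', ← Real.rpow_add_one hxy.ne']; congr 1; linarith
  have hL₂ : (x + y) ^ (-c₂) = (x + y) ^ c₁ / (x + y) := by
    rw [eq_div_iff hxy.ne', ← Real.rpow_add_one hxy.ne']; congr 1; linarith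
  rw [hL₁, hL₂, div_mul_eq_mul_div, div_mul_eq_mul_div, ← add_div, le_div_iff₀ hxy]
  calc x ^ (-c₁) * y ^ (-c₂) * (x + y) = x ^ c₂ * y ^ (-c₂) + y ^ c₁ * x ^ (-c₁) := by
        rw [← hx', ← hy']; ring
    _ ≤ (x + y) ^ c₂ * y ^ (-c₂) + (x + y) ^ c₁ * x ^ (-c₁) := by
        gcongr <;> linarith

section BetaIntegral

variable {a b ρ c c₁ c₂ : ℝ}

lemma intervalIntegrable_sub_right_rpow_neg (hc : c < 1) :
    IntervalIntegrable (fun s => (s - a) ^ (-c)) volume a b := by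
  simpa using
    (intervalIntegrable_rpow' (r := -c) (by linarith) (a := 0) (b := b - a)).comp_sub_right a

lemma intervalIntegrable_sub_left_rpow_neg (hc : c < 1) :
    IntervalIntegrable (fun s => (b - s) ^ (-c)) volume a b := by
  simpa using
    ((intervalIntegrable_rpow' (r := -c) (by linarith) (a := 0) (b := b - a)).comp_sub_left b).symm

lemma integral_sub_right_rpow_neg (hc : c < 1) :
    ∫ s in a..b, (s - a) ^ (-c) = (b - a) ^ (1 - c) / (1 - c) := by
  rw [integral_comp_sub_right (fun x => x ^ (-c)), integral_rpow (Or.inl (by linarith))]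
  simp [Real.zero_rpow (by linarith : -c + 1 ≠ 0)]
  ring_nf

lemma integral_sub_left_rpow_neg (hc : c < 1) :
    ∫ s in a..b, (b - s) ^ (-c) = (b - a) ^ (1 - c) / (1 - c) := by
  rw [integral_comp_sub_left (fun x => x ^ (-c)), integral_rpow (Or.inl (by linarith))]
  simp [Real.zero_rpow (by linarith : -c + 1 ≠ 0)]
  ring_nf

lemma sub_rpow_neg_mul_sub_rpow_neg_le (hc₁ : 0 ≤ c₁) (hc₂ : 0 ≤ c₂) (hc : c₁ + c₂ = 1)
    {s : ℝ} (hs : s ∈ Ioo a ρ) :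
    (s - a) ^ (-c₁) * (ρ - s) ^ (-c₂) ≤
      (ρ - a) ^ (-c₁) * (ρ - s) ^ (-c₂) + (ρ - a) ^ (-c₂) * (s - a) ^ (-c₁) := by
  simpa using rpow_neg_mul_rpow_neg_le (sub_pos.2 hs.1) (sub_pos.2 hs.2) hc₁ hc₂ hc

lemma intervalIntegrable_sub_rpow_neg_mul_sub_rpow_neg (haρ : a ≤ ρ) (hc₁ : 0 < c₁)
    (hc₂ : 0 < c₂) (hc : c₁ + c₂ = 1) :
    IntervalIntegrable (fun s => (s - a) ^ (-c₁) * (ρ - s) ^ (-c₂)) volume a ρ := by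
  refine (((intervalIntegrable_sub_left_rpow_neg (c := c₂) (by linarith)).const_mul
    ((ρ - a) ^ (-c₁))).add ((intervalIntegrable_sub_right_rpow_neg (c := c₁)
    (by linarith)).const_mul ((ρ - a) ^ (-c₂)))).mono_fun'
    (by fun_prop : Measurable _).aestronglyMeasurable ?_
  rw [uIoc_of_le haρ, ← Measure.restrict_congr_set Ioo_ae_eq_Ioc]
  refine ae_restrict_of_forall_mem measurableSet_Ioo fun s hs => ?_
  dsimp only
  rw [Real.norm_of_nonneg (mul_nonneg (Real.rpow_nonneg (sub_pos.2 hs.1).le _)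
    (Real.rpow_nonneg (sub_pos.2 hs.2).le _))]
  exact sub_rpow_neg_mul_sub_rpow_neg_le hc₁.le hc₂.le hc hs

theorem integral_sub_rpow_neg_mul_sub_rpow_neg_le (haρ : a < ρ) (hc₁ : 0 < c₁) (hc₂ : 0 < c₂)
    (hc : c₁ + c₂ = 1) :
    ∫ s in a..ρ, (s - a) ^ (-c₁) * (ρ - s) ^ (-c₂) ≤ 1 / c₁ + 1 / c₂ := by
  have hL : 0 < ρ - a := sub_pos.2 haρ
  have hcancel : ∀ {c c' : ℝ}, c + c' = 1 →
      (ρ - a) ^ (-c) * ((ρ - a) ^ (1 - c') / (1 - c')) = 1 / c := by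
    intro c c' h
    rw [mul_div_assoc', ← Real.rpow_add hL, show -c + (1 - c') = 0 by linarith,
      show 1 - c' = c by linarith, Real.rpow_zero]
  have hint₁ := (intervalIntegrable_sub_left_rpow_neg (a := a) (b := ρ) (c := c₂)
    (by linarith)).const_mul ((ρ - a) ^ (-c₁))
  have hint₂ := (intervalIntegrable_sub_right_rpow_neg (a := a) (b := ρ) (c := c₁)
    (by linarith)).const_mul ((ρ - a) ^ (-c₂))
  refine (integral_mono_ae_restrict haρ.le
    (intervalIntegrable_sub_rpow_neg_mul_sub_rpow_neg haρ.le hc₁ hc₂ hc) (hint₁.add hint₂)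
    ?_).trans_eq ?_
  · rw [← Measure.restrict_congr_set Ioo_ae_eq_Icc]
    exact ae_restrict_of_forall_mem measurableSet_Ioo fun s hs =>
      sub_rpow_neg_mul_sub_rpow_neg_le hc₁.le hc₂.le hc hs
  · rw [integral_add hint₁ hint₂, intervalIntegral.integral_const_mul,
      intervalIntegral.integral_const_mul, integral_sub_left_rpow_neg (by linarith),
      integral_sub_right_rpow_neg (by linarith), hcancel hc, hcancel (by linarith : c₂ + c₁ = 1)]

end BetaIntegral

lemma memLp_ofReal_of_integrable_rpow {α : Type*} [MeasurableSpace α] {μ : Measure α}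
    {f : α → ℝ} {p : ℝ} (hp : 0 < p) (hf0 : 0 ≤ᵐ[μ] f) (hf : AEMeasurable f μ)
    (hfp : Integrable (fun x => f x ^ p) μ) : MemLp f (ENNReal.ofReal p) μ := by
  refine (integrable_norm_rpow_iff hf.aestronglyMeasurable (by simpa using hp)
    ENNReal.ofReal_ne_top).1 (hfp.congr ?_)
  filter_upwards [hf0] with x hx
  rw [Real.norm_of_nonneg hx, ENNReal.toReal_ofReal hp.le]

/-- Hölder's inequality applied to `F ^ (1 / p) = (w F) ^ (1 / p) * w ^ (-1 / p)`. -/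
theorem integral_rpow_one_div_le_weighted {α : Type*} [MeasurableSpace α] {μ : Measure α}
    {F w : α → ℝ} {p q : ℝ} (hpq : p.HolderConjugate q) (hF0 : 0 ≤ᵐ[μ] F)
    (hw : ∀ᵐ x ∂μ, 0 < w x) (hFm : AEMeasurable F μ) (hwm : AEMeasurable w μ)
    (hFw : Integrable (fun x => w x * F x) μ) (hwq : Integrable (fun x => w x ^ (-(q / p))) μ) :
    ∫ x, F x ^ (1 / p) ∂μ ≤
      (∫ x, w x * F x ∂μ) ^ (1 / p) * (∫ x, w x ^ (-(q / p)) ∂μ) ^ (1 / q) := by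
  have hp := hpq.pos
  have hq := hpq.symm.pos
  have hfg : (fun x => (w x * F x) ^ (1 / p) * w x ^ (-(1 / p))) =ᵐ[μ]
      fun x => F x ^ (1 / p) := by
    filter_upwards [hF0, hw] with x hFx hwx
    rw [Real.mul_rpow hwx.le hFx, mul_right_comm, ← Real.rpow_add hwx, add_neg_cancel,
      Real.rpow_zero, one_mul]
  have hfp : (fun x => ((w x * F x) ^ (1 / p)) ^ p) =ᵐ[μ] fun x => w x * F x := by
    filter_upwards [hF0, hw] with x hFx hwx
    rw [one_div, Real.rpow_inv_rpow (mul_nonneg hwx.le hFx) hp.ne']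
  have hgq : (fun x => (w x ^ (-(1 / p))) ^ q) =ᵐ[μ] fun x => w x ^ (-(q / p)) := by
    filter_upwards [hw] with x hwx
    rw [← Real.rpow_mul hwx.le]
    ring_nf
  have hf0 : 0 ≤ᵐ[μ] fun x => (w x * F x) ^ (1 / p) := by
    filter_upwards [hF0, hw] with x hFx hwx
    exact Real.rpow_nonneg (mul_nonneg hwx.le hFx) _
  have hg0 : 0 ≤ᵐ[μ] fun x => w x ^ (-(1 / p)) := by
    filter_upwards [hw] with x hwx
    exact Real.rpow_nonneg hwx.le _
  calc ∫ x, F x ^ (1 / p) ∂μ = ∫ x, (w x * F x) ^ (1 / p) * w x ^ (-(1 / p)) ∂μ :=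
        (integral_congr_ae hfg).symm
    _ ≤ _ := integral_mul_le_Lp_mul_Lq_of_nonneg hpq hf0 hg0
        (memLp_ofReal_of_integrable_rpow hp hf0 ((hwm.mul hFm).pow_const _)
          (hFw.congr hfp.symm))
        (memLp_ofReal_of_integrable_rpow hq hg0 (hwm.pow_const _) (hwq.congr hgq.symm))
    _ = _ := by rw [integral_congr_ae hfp, integral_congr_ae hgq]

/-- With `p = μ + ν + 1`, the conjugate power of the weight `(s - a) ^ μ * (ρ - s) ^ ν` is
`(s - a) ^ (-μ / (μ + ν)) * (ρ - s) ^ (-ν / (μ + ν))`, whose integral is scale invariant. -/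
theorem intervalIntegral_rpow_one_div_le {F : ℝ → ℝ} {a ρ μ ν W : ℝ} (hμ : 0 < μ)
    (hν : 0 < ν) (haρ : a < ρ) (hF : ContinuousOn F (Icc a ρ)) (hF0 : ∀ s ∈ Icc a ρ, 0 ≤ F s)
    (hW : ∫ s in a..ρ, (s - a) ^ μ * (ρ - s) ^ ν * F s ≤ W) :
    ∫ s in a..ρ, F s ^ (1 / (μ + ν + 1)) ≤
      ((μ + ν) / μ + (μ + ν) / ν) ^ ((μ + ν) / (μ + ν + 1)) * W ^ (1 / (μ + ν + 1)) := by
  have hμν : 0 < μ + ν := by linarith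
  have hpq : (μ + ν + 1).HolderConjugate ((μ + ν + 1) / (μ + ν)) :=
    Real.holderConjugate_iff.2 ⟨by linarith, by field_simp; ring⟩
  have hc₁ := div_pos hμ hμν
  have hc₂ := div_pos hν hμν
  have hc : μ / (μ + ν) + ν / (μ + ν) = 1 := by field_simp
  have hweight : ∀ s ∈ Ioo a ρ,
      ((s - a) ^ μ * (ρ - s) ^ ν) ^ (-((μ + ν + 1) / (μ + ν) / (μ + ν + 1))) =
        (s - a) ^ (-(μ / (μ + ν))) * (ρ - s) ^ (-(ν / (μ + ν))) := fun s hs => by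
    rw [Real.mul_rpow (Real.rpow_nonneg (sub_pos.2 hs.1).le _)
        (Real.rpow_nonneg (sub_pos.2 hs.2).le _),
      ← Real.rpow_mul (sub_pos.2 hs.1).le, ← Real.rpow_mul (sub_pos.2 hs.2).le]
    congr 2 <;> field_simp
  have hwF : ContinuousOn (fun s => (s - a) ^ μ * (ρ - s) ^ ν * F s) (Icc a ρ) :=
    (by fun_prop (disch := positivity) : Continuous fun s => (s - a) ^ μ * (ρ - s) ^ ν
      ).continuousOn.mul hF
  have key := integral_rpow_one_div_le_weighted (μ := volume.restrict (Ioo a ρ)) (F := F)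
    (w := fun s => (s - a) ^ μ * (ρ - s) ^ ν) hpq
    (ae_restrict_of_forall_mem measurableSet_Ioo fun s hs => hF0 s (Ioo_subset_Icc_self hs))
    (ae_restrict_of_forall_mem measurableSet_Ioo fun s hs =>
      mul_pos (Real.rpow_pos_of_pos (sub_pos.2 hs.1) _) (Real.rpow_pos_of_pos (sub_pos.2 hs.2) _))
    ((hF.mono Ioo_subset_Icc_self).aestronglyMeasurable measurableSet_Ioo).aemeasurable
    (by fun_prop) (hwF.integrableOn_Icc.mono_set Ioo_subset_Icc_self)
    (((intervalIntegrable_iff_integrableOn_Ioo_of_le haρ.le).1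
      (intervalIntegrable_sub_rpow_neg_mul_sub_rpow_neg haρ.le hc₁ hc₂ hc)).congr_fun
      (fun s hs => (hweight s hs).symm) measurableSet_Ioo)
  rw [setIntegral_congr_fun measurableSet_Ioo hweight, one_div_div] at key
  simp only [← integral_Ioc_eq_integral_Ioo, ← integral_of_le haρ.le] at key
  refine key.trans (le_of_le_of_eq ?_ (mul_comm _ _))
  have hJ : 0 ≤ ∫ s in a..ρ, (s - a) ^ μ * (ρ - s) ^ ν * F s :=
    integral_nonneg haρ.le fun s hs => mul_nonneg (mul_nonneg
      (Real.rpow_nonneg (sub_nonneg.2 hs.1) _) (Real.rpow_nonneg (sub_nonneg.2 hs.2) _)) (hF0 s hs)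
  have hX : 0 ≤ ∫ s in a..ρ, (s - a) ^ (-(μ / (μ + ν))) * (ρ - s) ^ (-(ν / (μ + ν))) :=
    integral_nonneg haρ.le fun s hs => mul_nonneg (Real.rpow_nonneg (sub_nonneg.2 hs.1) _)
      (Real.rpow_nonneg (sub_nonneg.2 hs.2) _)
  gcongr
  · exact Real.rpow_nonneg (hJ.trans hW) _
  · simpa only [one_div_div] using integral_sub_rpow_neg_mul_sub_rpow_neg_le haρ hc₁ hc₂ hc

lemma rpow_mul_le_of_repeatedIntegral_le {m : ℕ} {α β R T : ℝ} {P g h : ℝ → ℝ} (hα : 0 ≤ α)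
    (hβ : 0 ≤ β) (hP0 : ∀ r ∈ Icc R T, 0 ≤ P r) (hP : AntitoneOn P (Icc R T))
    (hPc : ContinuousOn P (Icc R T)) (hg0 : ∀ r ∈ Icc R T, 0 ≤ g r)
    (hgc : ContinuousOn g (Icc R T))
    (hy : ∀ r ∈ Icc R T, repeatedIntegral m R (fun s => P s * g s ^ α) r ≤ h r)
    {a s c : ℝ} (ha : R ≤ a) (has : a ≤ s) (hs : s ≤ T) (hc : 0 ≤ c)
    (hcg : ∀ σ ∈ Icc a s, c ≤ g σ) :
    (s - a) ^ (((m : ℝ) + 1) * β) * (P s ^ β * c ^ (α * β)) ≤ ((m : ℝ) + 1) ^ β * h s ^ β := by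
  have hs' : s ∈ Icc R T := ⟨ha.trans has, hs⟩
  have hF : ContinuousOn (fun s => P s * g s ^ α) (Icc R T) :=
    hPc.mul (hgc.rpow_const fun _ _ => Or.inr hα)
  have hlow : (s - a) ^ (m + 1) / (m + 1) * (P s * c ^ α) ≤ h s :=
    calc _ ≤ ∫ σ in a..s, (s - σ) ^ m * (P σ * g σ ^ α) :=
          mul_le_integral_sub_left_pow_mul_of_antitoneOn has (hP.mono (Icc_subset_Icc ha hs))
            (hP0 s hs') (Real.rpow_nonneg hc α)
            (fun σ hσ => Real.rpow_le_rpow hc (hcg σ hσ) hα)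
            (intervalIntegrable_sub_left_pow_mul hF s ⟨ha, has.trans hs⟩ hs')
      _ ≤ repeatedIntegral m R (fun s => P s * g s ^ α) s :=
          integral_le_repeatedIntegral hF (fun σ hσ =>
            mul_nonneg (hP0 σ hσ) (Real.rpow_nonneg (hg0 σ hσ) α)) ha has le_rfl hs
      _ ≤ h s := hy s hs'
  have hsa : 0 ≤ s - a := sub_nonneg.2 has
  have hPs := hP0 s hs'
  have hpow := Real.rpow_le_rpow (by positivity) hlow hβ
  rwa [Real.mul_rpow (by positivity) (by positivity), Real.div_rpow (by positivity) (by positivity),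
    Real.mul_rpow hPs (by positivity), ← Real.rpow_natCast_mul hsa, ← Real.rpow_mul hc,
    div_mul_eq_mul_div, div_le_iff₀ (by positivity), mul_comm _ (_ ^ β), Nat.cast_succ] at hpow

theorem rpow_mul_integral_le_repeatedIntegral {m n : ℕ} {α β R T : ℝ} {P Q h g : ℝ → ℝ}
    (hα : 0 ≤ α) (hβ : 0 ≤ β)
    (hP0 : ∀ r ∈ Icc R T, 0 ≤ P r) (hP : AntitoneOn P (Icc R T)) (hPc : ContinuousOn P (Icc R T))
    (hQ0 : ∀ r ∈ Icc R T, 0 ≤ Q r) (hQc : ContinuousOn Q (Icc R T))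
    (hh0 : ∀ r ∈ Icc R T, 0 ≤ h r) (hhc : ContinuousOn h (Icc R T))
    (hg0 : ∀ r ∈ Icc R T, 0 ≤ g r) (hgc : ContinuousOn g (Icc R T))
    (hy : ∀ r ∈ Icc R T, repeatedIntegral m R (fun s => P s * g s ^ α) r ≤ h r)
    (hz : ∀ r ∈ Icc R T, repeatedIntegral n R (fun s => Q s * h s ^ β) r ≤ g r)
    {a ρ : ℝ} (ha : R ≤ a) (haρ : a ≤ ρ) (hρ : ρ ≤ T)
    (hza : 0 ≤ repeatedIntegral n R (fun s => Q s * h s ^ β) a) :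
    repeatedIntegral n R (fun s => Q s * h s ^ β) a ^ (α * β) *
        ∫ s in a..ρ, (s - a) ^ (((m : ℝ) + 1) * β) * (ρ - s) ^ (n : ℝ) * (Q s * P s ^ β) ≤
      ((m : ℝ) + 1) ^ β * repeatedIntegral n R (fun s => Q s * h s ^ β) ρ := by
  set z := repeatedIntegral n R (fun s => Q s * h s ^ β)
  have hF : ContinuousOn (fun s => Q s * h s ^ β) (Icc R T) :=
    hQc.mul (hhc.rpow_const fun _ _ => Or.inr hβ)
  have hF0 : ∀ s ∈ Icc R T, 0 ≤ Q s * h s ^ β := fun s hs =>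
    mul_nonneg (hQ0 s hs) (Real.rpow_nonneg (hh0 s hs) β)
  have hsub : Icc a ρ ⊆ Icc R T := Icc_subset_Icc ha hρ
  have hpt : ∀ s ∈ Icc a ρ,
      z a ^ (α * β) * ((s - a) ^ (((m : ℝ) + 1) * β) * (ρ - s) ^ (n : ℝ) * (Q s * P s ^ β)) ≤
        ((m : ℝ) + 1) ^ β * ((ρ - s) ^ n * (Q s * h s ^ β)) := by
    intro s hs
    -- `g ≥ z ≥ z a` on `[a, s]`
    have hlow := rpow_mul_le_of_repeatedIntegral_le hα hβ hP0 hP hPc hg0 hgc hy ha hs.1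
      (hs.2.trans hρ) hza fun σ hσ => (monotoneOn_repeatedIntegral hF hF0 ⟨ha, haρ.trans hρ⟩
        (hsub ⟨hσ.1, hσ.2.trans hs.2⟩) hσ.1).trans (hz σ (hsub ⟨hσ.1, hσ.2.trans hs.2⟩))
    have hρs : 0 ≤ (ρ - s) ^ n * Q s :=
      mul_nonneg (pow_nonneg (sub_nonneg.2 hs.2) n) (hQ0 s (hsub hs))
    calc _ = (ρ - s) ^ n * Q s * ((s - a) ^ (((m : ℝ) + 1) * β) * (P s ^ β * z a ^ (α * β))) := by
          rw [Real.rpow_natCast]; ring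
      _ ≤ (ρ - s) ^ n * Q s * (((m : ℝ) + 1) ^ β * h s ^ β) := by gcongr
      _ = _ := by ring
  have hJ : ContinuousOn (fun s => (s - a) ^ (((m : ℝ) + 1) * β) * (ρ - s) ^ (n : ℝ) *
      (Q s * P s ^ β)) (Icc a ρ) :=
    (by fun_prop (disch := positivity) : Continuous fun s =>
      (s - a) ^ (((m : ℝ) + 1) * β) * (ρ - s) ^ (n : ℝ)).continuousOn.mul
      ((hQc.mul (hPc.rpow_const fun _ _ => Or.inr hβ)).mono hsub)
  calc _ = ∫ s in a..ρ, z a ^ (α * β) *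
        ((s - a) ^ (((m : ℝ) + 1) * β) * (ρ - s) ^ (n : ℝ) * (Q s * P s ^ β)) :=
        (intervalIntegral.integral_const_mul _ _).symm
    _ ≤ ∫ s in a..ρ, ((m : ℝ) + 1) ^ β * ((ρ - s) ^ n * (Q s * h s ^ β)) :=
        integral_mono_on haρ (hJ.intervalIntegrable_of_Icc haρ |>.const_mul _)
          ((intervalIntegrable_sub_left_pow_mul hF ρ ⟨ha, haρ.trans hρ⟩ (hsub
            (right_mem_Icc.2 haρ))).const_mul _) hpt
    _ = ((m : ℝ) + 1) ^ β * ∫ s in a..ρ, (ρ - s) ^ n * (Q s * h s ^ β) :=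
        intervalIntegral.integral_const_mul _ _
    _ ≤ ((m : ℝ) + 1) ^ β * z ρ := by
        gcongr
        exact integral_le_repeatedIntegral hF hF0 ha haρ le_rfl hρ

theorem mul_integral_le_of_doubling {z E : ℝ → ℝ} {R T C θ κ : ℝ} (hθ : 0 < θ) (hκ : 1 < κ)
    (hC : 0 ≤ C) (hz : ContinuousOn z (Icc R T)) (hzm : MonotoneOn z (Icc R T))
    (hE : IntervalIntegrable E volume R T)
    (hstep : ∀ a ρ, R ≤ a → a < ρ → ρ ≤ T → 0 < z a →
      ∫ r in a..ρ, E r ≤ C * (z ρ / z a ^ κ) ^ θ)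
    {A : ℝ} (hA : A ∈ Icc R T) (hzA : 0 < z A) :
    z A ^ (θ * (κ - 1)) * ∫ r in A..T, E r ≤ C * 2 ^ θ / (1 - 2 ^ (-(θ * (κ - 1)))) := by
  set γ := θ * (κ - 1)
  have hγ : 0 < γ := mul_pos hθ (sub_pos.2 hκ)
  have hden : 0 < 1 - (2 : ℝ) ^ (-γ) :=
    sub_pos.2 (Real.rpow_lt_one_of_one_lt_of_neg one_lt_two (neg_lt_zero.2 hγ))
  set M := C * 2 ^ θ / (1 - 2 ^ (-γ))
  have hCM : C * 2 ^ θ ≤ M :=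
    (le_div_iff₀ hden).2 (mul_le_of_le_one_right (by positivity)
      (by linarith [Real.rpow_pos_of_pos two_pos (-γ)]))
  have hM : C * 2 ^ θ + M * 2 ^ (-γ) = M := by
    simp only [M]; field_simp; ring
  have hsub : ∀ {u v}, u ∈ Icc R T → v ∈ Icc R T → IntervalIntegrable E volume u v :=
    fun hu hv => hE.mono_set ((uIcc_subset_Icc hu hv).trans Icc_subset_uIcc)
  have hone : ∀ a ρ, R ≤ a → a ≤ ρ → ρ ≤ T → 0 < z a → z ρ ≤ 2 * z a →
      ∫ r in a..ρ, E r ≤ C * 2 ^ θ * z a ^ (-γ) := by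
    intro a ρ ha haρ hρ hza hzρ
    rcases haρ.eq_or_lt with rfl | haρ
    · rw [integral_same]; positivity
    have hzρ0 : 0 ≤ z ρ := hza.le.trans (hzm ⟨ha, haρ.le.trans hρ⟩ ⟨ha.trans haρ.le, hρ⟩ haρ.le)
    calc ∫ r in a..ρ, E r ≤ C * (z ρ / z a ^ κ) ^ θ := hstep a ρ ha haρ hρ hza
      _ ≤ C * (2 * z a / z a ^ κ) ^ θ := by gcongr
      _ = C * 2 ^ θ * z a ^ (-γ) := by
        rw [mul_div_assoc, ← Real.rpow_one_sub' hza.le (by linarith),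
          Real.mul_rpow zero_le_two (Real.rpow_nonneg hza.le _), ← Real.rpow_mul hza.le]
        simp only [γ]; ring_nf
  have hind : ∀ k : ℕ, ∀ a ∈ Icc R T, 0 < z a → z T ≤ 2 ^ k * z a →
      ∫ r in a..T, E r ≤ M * z a ^ (-γ) := by
    intro k
    induction k with
    | zero =>
      intro a ha hza hzT
      exact (hone a T ha.1 ha.2 le_rfl hza (by linarith)).trans (by gcongr)
    | succ k ih =>
      intro a ha hza hzT
      by_cases hdouble : z T ≤ 2 * z a
      · exact (hone a T ha.1 ha.2 le_rfl hza hdouble).trans (by gcongr)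
      obtain ⟨ρ, hρ, hzρ⟩ := intermediate_value_Icc ha.2 (hz.mono (Icc_subset_Icc ha.1 le_rfl))
        (⟨by linarith, by linarith⟩ : 2 * z a ∈ Icc (z a) (z T))
      have hρ' : ρ ∈ Icc R T := ⟨ha.1.trans hρ.1, hρ.2⟩
      have hzρ0 : 0 < z ρ := by linarith
      calc ∫ r in a..T, E r = (∫ r in a..ρ, E r) + ∫ r in ρ..T, E r :=
            (integral_add_adjacent_intervals (hsub ha hρ')
              (hsub hρ' ⟨ha.1.trans ha.2, le_rfl⟩)).symm
        _ ≤ C * 2 ^ θ * z a ^ (-γ) + M * z ρ ^ (-γ) :=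
            add_le_add (hone a ρ ha.1 hρ.1 hρ.2 hza hzρ.le)
              (ih ρ hρ' hzρ0 (by rwa [hzρ, ← mul_assoc, ← pow_succ]))
        _ = (C * 2 ^ θ + M * 2 ^ (-γ)) * z a ^ (-γ) := by
            rw [hzρ, Real.mul_rpow zero_le_two hza.le]; ring
        _ = M * z a ^ (-γ) := by rw [hM]
  obtain ⟨k, hk⟩ := pow_unbounded_of_one_lt (z T / z A) one_lt_two
  have hint := hind k A hA hzA ((div_lt_iff₀ hzA).1 hk).le
  calc z A ^ γ * ∫ r in A..T, E r ≤ z A ^ γ * (M * z A ^ (-γ)) := by gcongr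
    _ = M := by rw [mul_left_comm, ← Real.rpow_add hzA, add_neg_cancel, Real.rpow_zero, mul_one]

theorem stmt_4_general (m n : ℕ) (hn : 1 ≤ n) (α β : ℝ) (hα : 0 < α) (hβ : 0 < β)
    (hαβ : 1 < α * β) (b : ℝ) :
    ∃ C > (0 : ℝ), ∀ (R : ℝ), 0 < R →
      ∀ (P Q h g : ℝ → ℝ),
        (∀ r ∈ Set.Icc R (b * R), 0 ≤ P r) → AntitoneOn P (Set.Icc R (b * R)) →
        ContinuousOn P (Set.Icc R (b * R)) →
        (∀ r ∈ Set.Icc R (b * R), 0 ≤ Q r) → AntitoneOn Q (Set.Icc R (b * R)) →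
        ContinuousOn Q (Set.Icc R (b * R)) →
        (∀ r ∈ Set.Icc R (b * R), 0 ≤ h r) → ContinuousOn h (Set.Icc R (b * R)) →
        (∀ r ∈ Set.Icc R (b * R), 0 ≤ g r) → ContinuousOn g (Set.Icc R (b * R)) →
        (∀ r ∈ Set.Icc R (b * R), h r ≥ ∫ s in R..r, (r - s) ^ m * P s * g s ^ α) →
        (∀ r ∈ Set.Icc R (b * R), g r ≥ ∫ s in R..r, (r - s) ^ n * Q s * h s ^ β) →
        ∀ A ∈ Set.Ioo R (b * R),
          0 < (∫ s in R..A, (A - s) ^ n * Q s * h s ^ β) →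
          (∫ s in R..A, (A - s) ^ n * Q s * h s ^ β) ^
              ((α * β - 1) / (((m : ℝ) + 1) * β + n + 1)) *
            ∫ r in A..(b * R), (Q r * P r ^ β) ^ ((1 : ℝ) / (((m : ℝ) + 1) * β + n + 1)) ≤ C := by
  set μ : ℝ := ((m : ℝ) + 1) * β
  have hμ : 0 < μ := by positivity
  have hν : (0 : ℝ) < n := by exact_mod_cast hn
  set D := μ + n + 1
  have hθ : 0 < 1 / D := by positivity
  set C := ((μ + n) / μ + (μ + n) / n) ^ ((μ + n) / D) * (((m : ℝ) + 1) ^ β) ^ (1 / D)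
  refine ⟨C * 2 ^ (1 / D) / (1 - 2 ^ (-(1 / D * (α * β - 1)))), div_pos (by positivity)
    (sub_pos.2 (Real.rpow_lt_one_of_one_lt_of_neg one_lt_two
      (neg_lt_zero.2 (mul_pos hθ (sub_pos.2 hαβ))))), ?_⟩
  intro R _ P Q h g hP0 hP hPc hQ0 _ hQc hh0 hhc hg0 hgc hy hz A hA hzA
  simp only [mul_assoc] at hy hz hzA ⊢
  have hRT : R ≤ b * R := hA.1.le.trans hA.2.le
  set z := repeatedIntegral n R (fun s => Q s * h s ^ β)
  have hFz : ContinuousOn (fun s => Q s * h s ^ β) (Icc R (b * R)) :=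
    hQc.mul (hhc.rpow_const fun _ _ => Or.inr hβ.le)
  have hzm : MonotoneOn z (Icc R (b * R)) := monotoneOn_repeatedIntegral hFz fun s hs =>
    mul_nonneg (hQ0 s hs) (Real.rpow_nonneg (hh0 s hs) β)
  have hF : ContinuousOn (fun r => Q r * P r ^ β) (Icc R (b * R)) :=
    hQc.mul (hPc.rpow_const fun _ _ => Or.inr hβ.le)
  rw [← one_div_mul_eq_div]
  refine mul_integral_le_of_doubling hθ hαβ (by positivity) (continuousOn_repeatedIntegral hFz) hzm
    ((hF.rpow_const fun _ _ => Or.inr hθ.le).intervalIntegrable_of_Icc hRT)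
    (fun a ρ ha haρ hρ hza => ?_) ⟨hA.1.le, hA.2.le⟩ hzA
  have hsub : Icc a ρ ⊆ Icc R (b * R) := Icc_subset_Icc ha hρ
  have hzρ : 0 ≤ z ρ := hza.le.trans (hzm ⟨ha, haρ.le.trans hρ⟩ ⟨ha.trans haρ.le, hρ⟩ haρ.le)
  calc _ ≤ ((μ + n) / μ + (μ + n) / n) ^ ((μ + n) / D) *
        (((m : ℝ) + 1) ^ β * (z ρ / z a ^ (α * β))) ^ (1 / D) :=
        intervalIntegral_rpow_one_div_le hμ hν haρ (hF.mono hsub)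
          (fun s hs => mul_nonneg (hQ0 s (hsub hs)) (Real.rpow_nonneg (hP0 s (hsub hs)) β)) <| by
          rw [mul_div_assoc', le_div_iff₀ (by positivity), mul_comm]
          exact rpow_mul_integral_le_repeatedIntegral hα.le hβ.le hP0 hP hPc hQ0 hQc hh0 hhc hg0
            hgc hy hz ha haρ.le hρ hza.le
    _ = C * (z ρ / z a ^ (α * β)) ^ (1 / D) := by
        rw [Real.mul_rpow (by positivity) (div_nonneg hzρ (by positivity))]
        ring

theorem stmt_4 (m n : ℕ) (hm : 1 ≤ m) (hn : 1 ≤ n) (α β : ℝ) (hα : 0 < α) (hβ : 0 < β)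
    (hαβ : 1 < α * β) (b : ℝ) (hb : 1 < b) :
    ∃ C > (0 : ℝ), ∀ (R : ℝ), 0 < R →
      ∀ (P Q h g : ℝ → ℝ),
        (∀ r ∈ Set.Icc R (b * R), 0 ≤ P r) → AntitoneOn P (Set.Icc R (b * R)) →
        ContinuousOn P (Set.Icc R (b * R)) →
        (∀ r ∈ Set.Icc R (b * R), 0 ≤ Q r) → AntitoneOn Q (Set.Icc R (b * R)) →
        ContinuousOn Q (Set.Icc R (b * R)) →
        (∀ r ∈ Set.Icc R (b * R), 0 ≤ h r) → ContinuousOn h (Set.Icc R (b * R)) →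
        (∀ r ∈ Set.Icc R (b * R), 0 ≤ g r) → ContinuousOn g (Set.Icc R (b * R)) →
        (∀ r ∈ Set.Icc R (b * R), h r ≥ ∫ s in R..r, (r - s) ^ m * P s * g s ^ α) →
        (∀ r ∈ Set.Icc R (b * R), g r ≥ ∫ s in R..r, (r - s) ^ n * Q s * h s ^ β) →
        ∀ A ∈ Set.Ioo R (b * R),
          0 < (∫ s in R..A, (A - s) ^ n * Q s * h s ^ β) →
          (∫ s in R..A, (A - s) ^ n * Q s * h s ^ β) ^
              ((α * β - 1) / (((m : ℝ) + 1) * β + n + 1)) *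
            ∫ r in A..(b * R), (Q r * P r ^ β) ^ ((1 : ℝ) / (((m : ℝ) + 1) * β + n + 1)) ≤ C :=
  stmt_4_general m n hn α β hα hβ hαβ b
end

section
/- Let m, n ∈ ℕ with m, n ≥ 1, α, β > 0 with αβ > 1, and suppose y, z : [R, bR] → ℝ are smooth nonnegative functions with y^(i)(R) = 0 for 0 ≤ i ≤ m, z^(i)(R) = 0 for 0 ≤ i ≤ n, all derivatives y^(i) (1 ≤ i ≤ m) and z^(i) (1 ≤ i ≤ n) nonnegative, and, for nonnegative nonincreasing continuous P, Q, the inequalities y^(m+1)(r) ≥ m! P(r) z(r)^α and z^(n+1)(r) ≥ n! Q(r) y(r)^β hold on [R, bR]. Then there is a constant c > 0 depending only on m, n, α, β such that (z'(r))^((m+1)β + n + 1) ≥ c · Q(r) · P(r)^β · (z(r))^((α+m+1)β + n) for all r in [R, bR]. -/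
open ContDiff

private lemma rpow_add_one'' {x t : ℝ} (hx : 0 ≤ x) (ht : 0 ≤ t) :
    x ^ (t + 1) = x ^ t * x := by
  rcases eq_or_lt_of_le hx with h | h
  · rw [← h, Real.zero_rpow (by linarith), mul_zero]
  · exact Real.rpow_add_one h.ne' t

private lemma smooth_iter {Y : ℝ → ℝ} (h : ContDiff ℝ ∞ Y) (k : ℕ) :
    ContDiff ℝ ∞ (iteratedDeriv k Y) := by
  rw [iteratedDeriv_eq_iterate]
  exact ContDiff.iterate_deriv k h

private lemma hasDerivAt_iter {Y : ℝ → ℝ} (h : ContDiff ℝ ∞ Y) (j : ℕ) (s : ℝ) :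
    HasDerivAt (iteratedDeriv j Y) (iteratedDeriv (j + 1) Y s) s := by
  have h1 := (((smooth_iter h j).differentiable
    (by simp)).differentiableAt (x := s)).hasDerivAt
  rw [iteratedDeriv_succ]
  exact h1

private lemma mono_step (R r : ℝ) (hRr : R ≤ r) (G F z : ℝ → ℝ) (K C γ : ℝ)
    (hγ : 1 ≤ γ)
    (hG : ∀ s, HasDerivAt G (F s) s)
    (hz : ∀ s, HasDerivAt z (deriv z s) s)
    (hGR : G R = 0) (hzR : z R = 0)
    (hd : ∀ s ∈ Set.Icc R r, C * (deriv z s * γ * z s ^ (γ - 1)) ≤ F s * K) :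
    C * z r ^ γ ≤ G r * K := by
  have hφd : ∀ s, HasDerivAt (fun u => G u * K - C * z u ^ γ)
      (F s * K - C * (deriv z s * γ * z s ^ (γ - 1))) s := fun s =>
    ((hG s).mul_const K).sub (((hz s).rpow_const (Or.inr hγ)).const_mul C)
  have hmono : MonotoneOn (fun u => G u * K - C * z u ^ γ) (Set.Icc R r) := by
    apply monotoneOn_of_deriv_nonneg (convex_Icc R r)
    · exact fun s _ => ((hφd s).differentiableAt).continuousAt.continuousWithinAt
    · exact fun s _ => ((hφd s).differentiableAt).differentiableWithinAt
    · intro s hs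
      rw [interior_Icc] at hs
      rw [(hφd s).deriv]
      have := hd s ⟨hs.1.le, hs.2.le⟩
      linarith
  have h1 := hmono (Set.left_mem_Icc.mpr hRr) (Set.right_mem_Icc.mpr hRr) hRr
  have h0 : z R ^ γ = 0 := by rw [hzR]; exact Real.zero_rpow (by linarith)
  simp only [hGR, h0, mul_zero, zero_mul, zero_sub, neg_zero, sub_zero] at h1
  linarith

private lemma main_ind (R T : ℝ) (Y z W : ℝ → ℝ) (N : ℕ) (t0 e0 c0 : ℝ)
    (ht0 : 0 ≤ t0) (he0 : 0 ≤ e0) (hc0 : 0 ≤ c0)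
    (hY : ContDiff ℝ ∞ Y) (hzC : ContDiff ℝ ∞ z)
    (hW0 : ∀ s ∈ Set.Icc R T, 0 ≤ W s)
    (hWa : ∀ s ∈ Set.Icc R T, ∀ u ∈ Set.Icc R T, s ≤ u → W u ≤ W s)
    (hYR : ∀ i ≤ N, iteratedDeriv i Y R = 0)
    (hYpos : ∀ i, 1 ≤ i → i ≤ N + 1 → ∀ s ∈ Set.Icc R T, 0 ≤ iteratedDeriv i Y s)
    (hzRv : z R = 0)
    (hz0 : ∀ s ∈ Set.Icc R T, 0 ≤ z s)
    (hz'0 : ∀ s ∈ Set.Icc R T, 0 ≤ deriv z s)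
    (hz'mono : MonotoneOn (deriv z) (Set.Icc R T))
    (hbase : ∀ s ∈ Set.Icc R T,
      c0 * W s * z s ^ e0 ≤ iteratedDeriv (N + 1) Y s * deriv z s ^ t0) :
    ∀ k, k ≤ N + 1 → ∀ r ∈ Set.Icc R T,
      (c0 / ∏ i ∈ Finset.range k, (e0 + i + 1)) * W r * z r ^ (e0 + k) ≤
        iteratedDeriv (N + 1 - k) Y r * deriv z r ^ (t0 + k) := by
  intro k
  induction k with
  | zero => intro _ r hr; simpa using hbase r hr
  | succ k ih =>
    intro hk r hr
    have hkN : k ≤ N := by omega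
    have ihh := ih (by omega)
    have hk0 : (0 : ℝ) ≤ (k : ℝ) := Nat.cast_nonneg k
    have hprodpos : (0 : ℝ) < ∏ i ∈ Finset.range k, (e0 + i + 1) :=
      Finset.prod_pos (fun i _ => by have : (0:ℝ) ≤ (i:ℝ) := Nat.cast_nonneg i; linarith)
    set cK : ℝ := c0 / ∏ i ∈ Finset.range k, (e0 + i + 1) with hcK
    have hcKnn : 0 ≤ cK := div_nonneg hc0 hprodpos.le
    set γ : ℝ := e0 + k + 1 with hγdef
    have hγ1 : 1 ≤ γ := by rw [hγdef]; linarith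
    set K : ℝ := deriv z r ^ (t0 + k + 1) with hK
    set C : ℝ := (c0 / ∏ i ∈ Finset.range (k + 1), (e0 + i + 1)) * W r with hC
    have hGR : iteratedDeriv (N - k) Y R = 0 := hYR (N - k) (by omega)
    have hz'hd : ∀ s, HasDerivAt z (deriv z s) s := fun s =>
      ((hzC.differentiable (by simp)).differentiableAt).hasDerivAt
    have hGhd : ∀ s, HasDerivAt (iteratedDeriv (N - k) Y) (iteratedDeriv (N + 1 - k) Y s) s := by
      intro s
      have := hasDerivAt_iter hY (N - k) s
      rwa [show N - k + 1 = N + 1 - k by omega] at this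
    have hd : ∀ s ∈ Set.Icc R r,
        C * (deriv z s * γ * z s ^ (γ - 1)) ≤ iteratedDeriv (N + 1 - k) Y s * K := by
      intro s hs
      have hsT : s ∈ Set.Icc R T := ⟨hs.1, le_trans hs.2 hr.2⟩
      have hz's : 0 ≤ deriv z s := hz'0 s hsT
      have hz'sr : deriv z s ≤ deriv z r := hz'mono hsT hr hs.2
      have hIH := ihh s hsT
      have hF0 : 0 ≤ iteratedDeriv (N + 1 - k) Y s :=
        hYpos (N + 1 - k) (by omega) (by omega) s hsT
      have hzs0 : 0 ≤ z s := hz0 s hsT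
      have hzse : 0 ≤ z s ^ (e0 + (k : ℝ)) := Real.rpow_nonneg hzs0 _
      have hWrs : W r ≤ W s := hWa s hsT r hr hs.2
      have c1 : cK * W r * z s ^ (e0 + (k:ℝ)) * deriv z s ≤
          cK * W s * z s ^ (e0 + (k:ℝ)) * deriv z s := by
        apply mul_le_mul_of_nonneg_right _ hz's
        exact mul_le_mul_of_nonneg_right (mul_le_mul_of_nonneg_left hWrs hcKnn) hzse
      have c2 : cK * W s * z s ^ (e0 + (k:ℝ)) * deriv z s ≤
          iteratedDeriv (N + 1 - k) Y s * deriv z s ^ (t0 + (k:ℝ)) * deriv z s :=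
        mul_le_mul_of_nonneg_right hIH hz's
      have c3 : iteratedDeriv (N + 1 - k) Y s * deriv z s ^ (t0 + (k:ℝ)) * deriv z s =
          iteratedDeriv (N + 1 - k) Y s * deriv z s ^ (t0 + (k:ℝ) + 1) := by
        rw [rpow_add_one'' hz's (by linarith), mul_assoc]
      have c4 : deriv z s ^ (t0 + (k:ℝ) + 1) ≤ deriv z r ^ (t0 + (k:ℝ) + 1) :=
        Real.rpow_le_rpow hz's hz'sr (by linarith)
      have c5 : iteratedDeriv (N + 1 - k) Y s * deriv z s ^ (t0 + (k:ℝ) + 1) ≤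
          iteratedDeriv (N + 1 - k) Y s * K := mul_le_mul_of_nonneg_left c4 hF0
      have hγne : γ ≠ 0 := by positivity
      have cγ : C * γ = cK * W r := by
        rw [hC, hcK, Finset.prod_range_succ]
        have h2 : (e0 + (k:ℝ) + 1) ≠ 0 := hγne
        field_simp
        ring
      have hexp : z s ^ (γ - 1) = z s ^ (e0 + (k:ℝ)) := by
        norm_num [hγdef]
      have expand : C * (deriv z s * γ * z s ^ (γ - 1)) =
          (C * γ) * z s ^ (e0 + (k:ℝ)) * deriv z s := by rw [hexp]; ring
      rw [expand, cγ]
      exact le_trans c1 (le_trans c2 (by rw [c3]; exact c5))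
    have key := mono_step R r hr.1 (iteratedDeriv (N - k) Y) (iteratedDeriv (N + 1 - k) Y)
      z K C γ hγ1 hGhd hz'hd hGR hzRv hd
    have e1 : e0 + ((k : ℕ) + 1 : ℕ) = γ := by push_cast [hγdef]; ring
    have e2 : t0 + ((k : ℕ) + 1 : ℕ) = t0 + (k:ℝ) + 1 := by push_cast; ring
    rw [show N + 1 - (k + 1) = N - k from by omega, e1, e2]
    rw [mul_assoc]
    rw [hC, mul_assoc] at key
    exact key

theorem stmt_5 (m n : ℕ) (hm : 1 ≤ m) (hn : 1 ≤ n) (α β : ℝ) (hα : 0 < α) (hβ : 0 < β)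
    (hαβ : 1 < α * β) :
    ∃ c > (0 : ℝ), ∀ (R b : ℝ), 0 < R → 1 < b →
      ∀ (P Q y z : ℝ → ℝ),
        (∀ r ∈ Set.Icc R (b * R), 0 ≤ P r) → AntitoneOn P (Set.Icc R (b * R)) →
        ContinuousOn P (Set.Icc R (b * R)) →
        (∀ r ∈ Set.Icc R (b * R), 0 ≤ Q r) → AntitoneOn Q (Set.Icc R (b * R)) →
        ContinuousOn Q (Set.Icc R (b * R)) →
        ContDiff ℝ (⊤ : ℕ∞) y → ContDiff ℝ (⊤ : ℕ∞) z →
        (∀ r ∈ Set.Icc R (b * R), 0 ≤ y r) → (∀ r ∈ Set.Icc R (b * R), 0 ≤ z r) →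
        (∀ i ≤ m, iteratedDeriv i y R = 0) → (∀ i ≤ n, iteratedDeriv i z R = 0) →
        (∀ i, 1 ≤ i → i ≤ m → ∀ r ∈ Set.Icc R (b * R), 0 ≤ iteratedDeriv i y r) →
        (∀ i, 1 ≤ i → i ≤ n → ∀ r ∈ Set.Icc R (b * R), 0 ≤ iteratedDeriv i z r) →
        (∀ r ∈ Set.Icc R (b * R),
          iteratedDeriv (m + 1) y r ≥ (Nat.factorial m : ℝ) * P r * z r ^ α) →
        (∀ r ∈ Set.Icc R (b * R),
          iteratedDeriv (n + 1) z r ≥ (Nat.factorial n : ℝ) * Q r * y r ^ β) →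
        ∀ r ∈ Set.Icc R (b * R),
          deriv z r ^ (((m : ℝ) + 1) * β + n + 1) ≥
            c * Q r * P r ^ β * z r ^ ((α + m + 1) * β + n) := by
  have hprod1 : (0 : ℝ) < ∏ i ∈ Finset.range (m + 1), (α + i + 1) :=
    Finset.prod_pos fun i _ => by have : (0:ℝ) ≤ (i:ℝ) := Nat.cast_nonneg i; linarith
  set d1 : ℝ := (m.factorial : ℝ) / ∏ i ∈ Finset.range (m + 1), (α + i + 1) with hd1def
  have hd1 : 0 < d1 := div_pos (by exact_mod_cast m.factorial_pos) hprod1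
  have hm0 : (0 : ℝ) ≤ (m : ℝ) := Nat.cast_nonneg m
  have hprod2 : (0 : ℝ) < ∏ i ∈ Finset.range n, ((α + m + 1) * β + i + 1) :=
    Finset.prod_pos fun i _ => by
      have h1 : (0:ℝ) ≤ (i:ℝ) := Nat.cast_nonneg i
      have h2 : 0 < (α + m + 1) * β := by positivity
      linarith
  refine ⟨(n.factorial : ℝ) * d1 ^ β / ∏ i ∈ Finset.range n, ((α + m + 1) * β + i + 1),
    div_pos (mul_pos (by exact_mod_cast n.factorial_pos) (Real.rpow_pos_of_pos hd1 β)) hprod2,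
    ?_⟩
  intro R b hR hb P Q y z hP0 hPa hPc hQ0 hQa hQc hy hz hy0 hz0 hyR hzR hyd hzd hyineq hzineq
  have hyS : ContDiff ℝ ∞ y := hy.of_le (by simp)
  have hzS : ContDiff ℝ ∞ z := hz.of_le (by simp)
  have hzRval : z R = 0 := by
    have := hzR 0 (Nat.zero_le n); simpa [iteratedDeriv_zero] using this
  have hz'nonneg : ∀ s ∈ Set.Icc R (b * R), 0 ≤ deriv z s := fun s hs => by
    have := hzd 1 le_rfl hn s hs; simpa [iteratedDeriv_one] using this
  have hznn : ∀ s ∈ Set.Icc R (b * R), (0:ℝ) ≤ (n.factorial : ℝ) * Q s * y s ^ β :=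
    fun s hs => mul_nonneg (mul_nonneg (Nat.cast_nonneg _) (hQ0 s hs))
      (Real.rpow_nonneg (hy0 s hs) β)
  have hz2 : ∀ s ∈ Set.Icc R (b * R), 0 ≤ iteratedDeriv 2 z s := by
    intro s hs
    rcases Nat.lt_or_ge n 2 with h | h
    · have hn1 : n + 1 = 2 := by omega
      rw [← hn1]
      exact le_trans (hznn s hs) (hzineq s hs)
    · exact hzd 2 (by norm_num) h s hs
  have hz'mono : MonotoneOn (deriv z) (Set.Icc R (b * R)) := by
    have hdz : ContDiff ℝ ∞ (deriv z) := (contDiff_infty_iff_deriv.mp hzS).2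
    apply monotoneOn_of_deriv_nonneg (convex_Icc R (b * R))
    · exact hdz.continuous.continuousOn
    · exact (hdz.differentiable (by simp)).differentiableOn
    · intro s hs
      rw [interior_Icc] at hs
      have hd := hasDerivAt_iter hzS 1 s
      rw [iteratedDeriv_one] at hd
      rw [hd.deriv]
      exact hz2 s ⟨hs.1.le, hs.2.le⟩
  have hyple : ∀ i, 1 ≤ i → i ≤ m + 1 → ∀ s ∈ Set.Icc R (b * R), 0 ≤ iteratedDeriv i y s := by
    intro i h1 h2 s hs
    rcases Nat.lt_or_ge i (m + 1) with h | h
    · exact hyd i h1 (by omega) s hs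
    · have hi : i = m + 1 := by omega
      subst hi
      refine le_trans ?_ (hyineq s hs)
      exact mul_nonneg (mul_nonneg (Nat.cast_nonneg _) (hP0 s hs))
        (Real.rpow_nonneg (hz0 s hs) α)
  have hzple : ∀ i, 1 ≤ i → i ≤ n + 1 → ∀ s ∈ Set.Icc R (b * R), 0 ≤ iteratedDeriv i z s := by
    intro i h1 h2 s hs
    rcases Nat.lt_or_ge i (n + 1) with h | h
    · exact hzd i h1 (by omega) s hs
    · have hi : i = n + 1 := by omega
      subst hi
      exact le_trans (hznn s hs) (hzineq s hs)
  -- first induction: y against z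
  have claim1 := main_ind R (b * R) y z P m 0 α (m.factorial : ℝ) le_rfl hα.le
    (Nat.cast_nonneg _) hyS hzS hP0 (fun s hs u hu hsu => hPa hs hu hsu) hyR hyple
    hzRval hz0 hz'nonneg hz'mono
    (fun s hs => by rw [Real.rpow_zero, mul_one]; exact hyineq s hs)
  have hc1 : ∀ s ∈ Set.Icc R (b * R),
      d1 * P s * z s ^ (α + ((m:ℝ) + 1)) ≤ y s * deriv z s ^ ((m:ℝ) + 1) := by
    intro s hs
    have h := claim1 (m + 1) le_rfl s hs
    rw [Nat.sub_self, iteratedDeriv_zero, zero_add] at h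
    push_cast at h
    exact h
  -- base for second induction
  have hbase2 : ∀ s ∈ Set.Icc R (b * R),
      ((n.factorial : ℝ) * d1 ^ β) * (Q s * P s ^ β) * z s ^ ((α + (m:ℝ) + 1) * β) ≤
        iteratedDeriv (n + 1) z s * deriv z s ^ (((m:ℝ) + 1) * β) := by
    intro s hs
    have hys : 0 ≤ y s := hy0 s hs
    have hz's : 0 ≤ deriv z s := hz'nonneg s hs
    have hzs : 0 ≤ z s := hz0 s hs
    have hPs : 0 ≤ P s := hP0 s hs
    have h1 : d1 * P s * z s ^ (α + ((m:ℝ) + 1)) ≤ y s * deriv z s ^ ((m:ℝ) + 1) := hc1 s hs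
    have hLnn : 0 ≤ d1 * P s * z s ^ (α + ((m:ℝ) + 1)) :=
      mul_nonneg (mul_nonneg hd1.le hPs) (Real.rpow_nonneg hzs _)
    have h2 := Real.rpow_le_rpow hLnn h1 hβ.le
    have e1 : (y s * deriv z s ^ ((m:ℝ) + 1)) ^ β =
        y s ^ β * deriv z s ^ (((m:ℝ) + 1) * β) := by
      rw [Real.mul_rpow hys (Real.rpow_nonneg hz's _), ← Real.rpow_mul hz's]
    have e2 : (d1 * P s * z s ^ (α + ((m:ℝ) + 1))) ^ β =
        d1 ^ β * P s ^ β * z s ^ ((α + ((m:ℝ) + 1)) * β) := by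
      rw [Real.mul_rpow (mul_nonneg hd1.le hPs) (Real.rpow_nonneg hzs _),
        Real.mul_rpow hd1.le hPs, ← Real.rpow_mul hzs]
    have e3 : (α + ((m:ℝ) + 1)) * β = (α + (m:ℝ) + 1) * β := by ring
    rw [e1, e2, e3] at h2
    have h3 := hzineq s hs
    have hA : 0 ≤ deriv z s ^ (((m:ℝ) + 1) * β) := Real.rpow_nonneg hz's _
    calc ((n.factorial : ℝ) * d1 ^ β) * (Q s * P s ^ β) * z s ^ ((α + (m:ℝ) + 1) * β)
        = (n.factorial : ℝ) * Q s * (d1 ^ β * P s ^ β * z s ^ ((α + (m:ℝ) + 1) * β)) := by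
          ring
      _ ≤ (n.factorial : ℝ) * Q s * (y s ^ β * deriv z s ^ (((m:ℝ) + 1) * β)) :=
          mul_le_mul_of_nonneg_left h2
            (mul_nonneg (Nat.cast_nonneg _) (hQ0 s hs))
      _ = ((n.factorial : ℝ) * Q s * y s ^ β) * deriv z s ^ (((m:ℝ) + 1) * β) := by ring
      _ ≤ iteratedDeriv (n + 1) z s * deriv z s ^ (((m:ℝ) + 1) * β) :=
          mul_le_mul_of_nonneg_right h3 hA
  -- second induction: z against z
  have hW0 : ∀ s ∈ Set.Icc R (b * R), 0 ≤ Q s * P s ^ β := fun s hs =>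
    mul_nonneg (hQ0 s hs) (Real.rpow_nonneg (hP0 s hs) β)
  have hWa : ∀ s ∈ Set.Icc R (b * R), ∀ u ∈ Set.Icc R (b * R), s ≤ u →
      Q u * P u ^ β ≤ Q s * P s ^ β := fun s hs u hu hsu =>
    mul_le_mul (hQa hs hu hsu)
      (Real.rpow_le_rpow (hP0 u hu) (hPa hs hu hsu) hβ.le)
      (Real.rpow_nonneg (hP0 u hu) β) (hQ0 s hs)
  have claim2 := main_ind R (b * R) z z (fun s => Q s * P s ^ β) n
    (((m:ℝ) + 1) * β) ((α + (m:ℝ) + 1) * β) ((n.factorial : ℝ) * d1 ^ β)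
    (by positivity) (by positivity)
    (mul_nonneg (Nat.cast_nonneg _) (Real.rpow_nonneg hd1.le β))
    hzS hzS hW0 hWa hzR hzple hzRval hz0 hz'nonneg hz'mono hbase2
  intro r hr
  have hfin := claim2 n (by omega) r hr
  rw [show n + 1 - n = 1 from by omega, iteratedDeriv_one] at hfin
  have hz'r : 0 ≤ deriv z r := hz'nonneg r hr
  rw [ge_iff_le, rpow_add_one'' hz'r (by positivity)]
  calc (n.factorial : ℝ) * d1 ^ β / (∏ i ∈ Finset.range n, ((α + ↑m + 1) * β + ↑i + 1)) *
        Q r * P r ^ β * z r ^ ((α + ↑m + 1) * β + ↑n)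
      = ((n.factorial : ℝ) * d1 ^ β / ∏ i ∈ Finset.range n, ((α + (m:ℝ) + 1) * β + ↑i + 1)) *
        (Q r * P r ^ β) * z r ^ ((α + (m:ℝ) + 1) * β + ↑n) := by ring
    _ ≤ deriv z r * deriv z r ^ (((m:ℝ) + 1) * β + ↑n) := hfin
    _ = deriv z r ^ (((m:ℝ) + 1) * β + ↑n) * deriv z r := mul_comm _ _
end

section
/- Let λ < 2, ν ∈ ℝ, L > 0, and r* > 1. Define u₁(r) = (L/r) ∫_{r*}^r (r - s) s^(1-λ) (ln s)^(-ν) ds for r > r*. Then there exist constants C > 0 and r₁ > r* such that u₁(r) ≥ C r^(2-λ) (ln r)^(-ν) for all r > r₁. -/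
lemma aux_rpow_ge (x t : ℝ) (h1 : 1/2 ≤ x) (h2 : x ≤ 1) :
    (2:ℝ) ^ (-|t|) ≤ x ^ t := by
  have hx : 0 < x := lt_of_lt_of_le (by norm_num) h1
  rcases le_or_gt 0 t with ht | ht
  · rw [abs_of_nonneg ht]
    have h : (2:ℝ) ^ (-t) = (1/2 : ℝ) ^ t := by
      rw [Real.rpow_neg (by norm_num), one_div, Real.inv_rpow (by norm_num)]
    rw [h]
    exact Real.rpow_le_rpow (by norm_num) h1 ht
  · rw [abs_of_neg ht, neg_neg]
    calc (2:ℝ) ^ t ≤ 1 := Real.rpow_le_one_of_one_le_of_nonpos one_le_two ht.le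
    _ ≤ x ^ t := Real.one_le_rpow_of_pos_of_le_one_of_nonpos hx h2 ht.le

theorem stmt_13 (lam ν L rs : ℝ) (hlam : lam < 2) (hL : 0 < L) (hrs : 1 < rs) :
    ∃ C > 0, ∃ r₁ > rs, ∀ r > r₁,
      (L / r) * ∫ s in rs..r, (r - s) * s ^ (1 - lam) * Real.log s ^ (-ν)
        ≥ C * r ^ (2 - lam) * Real.log r ^ (-ν) := by
  set c1 : ℝ := (2:ℝ) ^ (-|1 - lam|) with hc1def
  set c2 : ℝ := (2:ℝ) ^ (-|ν|) with hc2def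
  have hc1 : 0 < c1 := Real.rpow_pos_of_pos two_pos _
  have hc2 : 0 < c2 := Real.rpow_pos_of_pos two_pos _
  refine ⟨L * c1 * c2 / 16, by positivity, max (2*rs) 4, ?_, ?_⟩
  · exact lt_of_lt_of_le (by linarith) (le_max_left _ _)
  intro r hr
  have hr4 : 4 < r := lt_of_le_of_lt (le_max_right _ _) hr
  have hrs2 : 2 * rs < r := lt_of_le_of_lt (le_max_left _ _) hr
  have hr0 : (0:ℝ) < r := by linarith
  have hrsr : rs < r := by linarith
  have hlogr : 0 < Real.log r := Real.log_pos (by linarith)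
  have hlog4 : 2 * Real.log 2 ≤ Real.log r := by
    have : Real.log 4 ≤ Real.log r := Real.log_le_log (by norm_num) (by linarith)
    have h4 : Real.log 4 = 2 * Real.log 2 := by
      rw [show (4:ℝ) = 2^2 by norm_num, Real.log_pow]; push_cast; ring
    linarith
  set f : ℝ → ℝ := fun s => (r - s) * s ^ (1 - lam) * Real.log s ^ (-ν) with hfdef
  have hfc : ContinuousOn f (Set.Icc rs r) := by
    apply ContinuousOn.mul
    · apply ContinuousOn.mul
      · exact continuousOn_const.sub continuousOn_id
      · exact ContinuousOn.rpow_const continuousOn_id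
          (fun s hs => Or.inl (by have := hs.1; intro h; rw [h] at this; linarith))
    · apply ContinuousOn.rpow_const
      · exact Real.continuousOn_log.mono (fun s hs h => by
          simp only [Set.mem_singleton_iff] at h
          have := hs.1; rw [h] at this; linarith)
      · intro s hs
        have h1 : 1 < s := lt_of_lt_of_le hrs hs.1
        exact Or.inl (ne_of_gt (Real.log_pos h1))
  have hf_nonneg : ∀ s ∈ Set.Icc rs r, 0 ≤ f s := by
    intro s hs
    have h1 : (1:ℝ) < s := lt_of_lt_of_le hrs hs.1
    have : 0 ≤ r - s := by linarith [hs.2]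
    have h2 : 0 ≤ s ^ (1 - lam) := Real.rpow_nonneg (by linarith) _
    have h3 : 0 ≤ Real.log s ^ (-ν) := Real.rpow_nonneg (Real.log_pos h1).le _
    positivity
  -- subinterval bounds
  have hab1 : rs ≤ r / 2 := by linarith
  have hab2 : r / 2 ≤ 3 * r / 4 := by linarith
  have hab3 : 3 * r / 4 ≤ r := by linarith
  have hint : ∀ a b : ℝ, rs ≤ a → a ≤ b → b ≤ r → IntervalIntegrable f MeasureTheory.volume a b := by
    intro a b ha hab hb
    apply ContinuousOn.intervalIntegrable
    apply hfc.mono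
    rw [Set.uIcc_of_le hab]
    exact Set.Icc_subset_Icc ha hb
  set m : ℝ := (r/4) * (c1 * r ^ (1 - lam)) * (c2 * Real.log r ^ (-ν)) with hmdef
  have hbound : ∀ s ∈ Set.Icc (r/2) (3*r/4), m ≤ f s := by
    intro s hs
    have hs1 : r/2 ≤ s := hs.1
    have hs2 : s ≤ 3*r/4 := hs.2
    have hspos : 0 < s := by linarith
    have h1 : r/4 ≤ r - s := by linarith
    -- s^(1-lam) ≥ c1 * r^(1-lam)
    have h2 : c1 * r ^ (1 - lam) ≤ s ^ (1 - lam) := by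
      have hsr : s = (s/r) * r := by field_simp
      have : s ^ (1 - lam) = (s/r) ^ (1 - lam) * r ^ (1 - lam) := by
        rw [hsr]
        rw [Real.mul_rpow (by positivity) hr0.le]
        congr 2 <;> field_simp
      rw [this]
      apply mul_le_mul_of_nonneg_right _ (Real.rpow_nonneg hr0.le _)
      exact aux_rpow_ge _ _ (by rw [le_div_iff₀ hr0]; linarith) (by rw [div_le_one hr0]; linarith)
    -- log s ^ (-ν) ≥ c2 * log r ^ (-ν)
    have hls : 0 < Real.log s := Real.log_pos (by linarith)
    have h3 : c2 * Real.log r ^ (-ν) ≤ Real.log s ^ (-ν) := by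
      have hle : Real.log s ≤ Real.log r := Real.log_le_log hspos (by linarith)
      have hge : Real.log r / 2 ≤ Real.log s := by
        have : Real.log (r/2) ≤ Real.log s := Real.log_le_log (by linarith) hs1
        rw [Real.log_div (by linarith) (by norm_num)] at this
        linarith
      have key : Real.log s = (Real.log s / Real.log r) * Real.log r := by field_simp
      have : Real.log s ^ (-ν) = (Real.log s / Real.log r) ^ (-ν) * Real.log r ^ (-ν) := by
        rw [key, Real.mul_rpow (by positivity) hlogr.le]
        congr 2 <;> field_simp
      rw [this]
      have hq1 : 1/2 ≤ Real.log s / Real.log r := by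
        rw [le_div_iff₀ hlogr]; linarith
      have hq2 : Real.log s / Real.log r ≤ 1 := by
        rw [div_le_one hlogr]; exact hle
      have haux := aux_rpow_ge (Real.log s / Real.log r) (-ν) hq1 hq2
      rw [abs_neg] at haux
      exact mul_le_mul_of_nonneg_right haux (Real.rpow_nonneg hlogr.le _)
    have hm0 : 0 ≤ c1 * r ^ (1 - lam) := by positivity
    have hm1 : 0 ≤ c2 * Real.log r ^ (-ν) := by positivity
    calc m ≤ (r - s) * (s ^ (1 - lam)) * (Real.log s ^ (-ν)) := by
          apply mul_le_mul
          · apply mul_le_mul h1 h2 hm0 (by linarith)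
          · exact h3
          · exact hm1
          · have : 0 ≤ s ^ (1-lam) := Real.rpow_nonneg hspos.le _
            have : 0 ≤ r - s := by linarith
            positivity
      _ = f s := rfl
  have h12 := hint rs (r/2) le_rfl hab1 (by linarith)
  have h23 := hint (r/2) (3*r/4) hab1 hab2 hab3
  have h34 := hint (3*r/4) r (by linarith) hab3 le_rfl
  have hsplit : ∫ s in rs..r, f s =
      (∫ s in rs..(r/2), f s) + (∫ s in (r/2)..(3*r/4), f s) + (∫ s in (3*r/4)..r, f s) := by
    rw [intervalIntegral.integral_add_adjacent_intervals h12 h23,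
        intervalIntegral.integral_add_adjacent_intervals (h12.trans h23) h34]
  have hI1 : 0 ≤ ∫ s in rs..(r/2), f s :=
    intervalIntegral.integral_nonneg hab1
      (fun s hs => hf_nonneg s ⟨hs.1, le_trans hs.2 (by linarith)⟩)
  have hI3 : 0 ≤ ∫ s in (3*r/4)..r, f s :=
    intervalIntegral.integral_nonneg hab3
      (fun s hs => hf_nonneg s ⟨le_trans (by linarith) hs.1, hs.2⟩)
  have hI2 : (r/4) * m ≤ ∫ s in (r/2)..(3*r/4), f s := by
    have := intervalIntegral.integral_mono_on hab2 (intervalIntegrable_const (c := m)) h23 hbound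
    rw [intervalIntegral.integral_const, smul_eq_mul] at this
    calc (r/4) * m = (3*r/4 - r/2) * m := by ring
      _ ≤ _ := this
  have hItot : (r/4) * m ≤ ∫ s in rs..r, f s := by
    rw [hsplit]; linarith
  have hm_nonneg : 0 ≤ m := by
    have := Real.rpow_nonneg hr0.le (1-lam)
    have := Real.rpow_nonneg hlogr.le (-ν)
    positivity
  have hLr : 0 < L / r := div_pos hL hr0
  have hfin : L / r * ((r/4) * m) = L * c1 * c2 / 16 * r ^ (2-lam) * Real.log r ^ (-ν) := by
    have hpow : r ^ (2-lam) = r * r ^ (1-lam) := by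
      rw [show (2-lam : ℝ) = 1 + (1-lam) by ring, Real.rpow_add hr0, Real.rpow_one]
    rw [hpow, hmdef]
    field_simp
    ring
  calc L / r * ∫ s in rs..r, f s ≥ L / r * ((r/4) * m) := by
        apply mul_le_mul_of_nonneg_left hItot hLr.le
    _ = L * c1 * c2 / 16 * r ^ (2-lam) * Real.log r ^ (-ν) := hfin
end

section
/- Let α ≥ 1, β ≥ 1 with αβ > 1, λ = μ = 2, ν < 1, ξ ∈ ℝ with 1 - ξ + β(1 - ν) > 0. Define by induction v₀(r) = 1 and, for k ≥ 1, u_k(r) = (1/(N-2)) ∫_ρ^r s · L₁ s^(-2) (ln s)^(-ν) [1 - (s/r)^(N-2)] v_{k-1}(s)^α ds and v_k(r) = (1/(N-2)) ∫_ρ^r s · L₂ s^(-2) (ln s)^(-ξ) [1 - (s/r)^(N-2)] u_{k-1}(s)^β ds, with u₀ = 1, where N ≥ 3, ρ > 1, L₁, L₂ > 0. Then for every k ≥ 0 there exist C_k > 0 and r_k > ρ such that v_{2k}(r) ≥ C_k (ln r)^(((α^k β^k - 1)(1 - ξ + β(1-ν)))/(αβ - 1)) for all r > r_k. -/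
/-!
If `f(s) ≥ c (log s)^a` for large `s`, then in the radial potential of `s^{-2} (log s)^{-σ} f^γ`
one may discard `[ρ, b] ∪ [r/2, r]` and use `1 - (s/r)^{N-2} ≥ 1/2` on `[b, r/2]`, which leaves
`≳ ∫_b^{r/2} s⁻¹ (log s)^{aγ-σ} ds ≳ (log r)^{aγ+1-σ}` provided `aγ - σ > -1`.
Going from `v_{2k}` through `u_{2k+1}` to `v_{2k+2}` the exponent therefore obeys
`e_{k+1} = αβ e_k + (1 - ξ + β(1-ν))`, `e_0 = 0`, whose solution is
`((αβ)^k - 1)(1 - ξ + β(1-ν))/(αβ - 1) ≥ 0`; this nonnegativity keeps `aγ - σ > -1` true at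
every step.
-/

open Real Set Filter MeasureTheory intervalIntegral

theorem continuousOn_primitive_Ici {ρ : ℝ} {G : ℝ → ℝ} (hG : ContinuousOn G (Ici ρ)) :
    ContinuousOn (fun x => ∫ s in ρ..x, G s) (Ici ρ) := by
  intro b (hb : ρ ≤ b)
  have hint : IntervalIntegrable G volume (min ρ ρ) (max ρ (b + 1)) := by
    rw [min_self, max_eq_right (by linarith)]
    exact (hG.mono (uIcc_of_le (by linarith : ρ ≤ b + 1) ▸ Icc_subset_Ici_self)).intervalIntegrable
  refine (continuousWithinAt_primitive (measure_singleton b) hint).mono_of_mem_nhdsWithin ?_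
  rw [← Ici_inter_Iic]
  exact inter_mem_nhdsWithin _ (Iic_mem_nhds (lt_add_one b))

theorem one_sub_div_pow_nonneg {s r : ℝ} (hs : 0 ≤ s) (hsr : s ≤ r) (n : ℕ) :
    0 ≤ 1 - (s / r) ^ n :=
  sub_nonneg.mpr (pow_le_one₀ (div_nonneg hs (hs.trans hsr)) (div_le_one_of_le₀ hsr (hs.trans hsr)))

theorem half_le_one_sub_div_pow {s r : ℝ} (hs : 0 < s) (hsr : 2 * s ≤ r) {n : ℕ} (hn : n ≠ 0) :
    1 / 2 ≤ 1 - (s / r) ^ n := by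
  have hr : 0 < r := by linarith
  have hsr' : s / r ≤ 1 / 2 := by rw [div_le_iff₀ hr]; linarith
  have := pow_le_of_le_one (div_nonneg hs.le hr.le) (by linarith) hn
  linarith

theorem continuousOn_inv_mul_log_rpow (θ : ℝ) :
    ContinuousOn (fun s => s⁻¹ * log s ^ θ) (Ioi 1) := by
  have hne : ∀ s ∈ Ioi (1 : ℝ), s ≠ 0 := fun s (hs : 1 < s) => by linarith
  exact (continuousOn_id.inv₀ hne).mul ((continuousOn_id.log hne).rpow_const
    fun s (hs : 1 < s) => Or.inl (Real.log_pos hs).ne')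

theorem integral_inv_mul_log_rpow {b x θ : ℝ} (hb : 1 < b) (hbx : b ≤ x) (hθ : θ + 1 ≠ 0) :
    ∫ s in b..x, s⁻¹ * log s ^ θ = (log x ^ (θ + 1) - log b ^ (θ + 1)) / (θ + 1) := by
  have hpos : ∀ s ∈ uIcc b x, 1 < s := fun s hs => hb.trans_le (uIcc_of_le hbx ▸ hs).1
  have hderiv : ∀ s ∈ uIcc b x,
      HasDerivAt (fun t => log t ^ (θ + 1) / (θ + 1)) (s⁻¹ * log s ^ θ) s := by
    intro s hs
    have hlog := (Real.log_pos (hpos s hs)).ne'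
    refine (((Real.hasDerivAt_rpow_const (p := θ + 1) (Or.inl hlog)).comp s
      (Real.hasDerivAt_log (by linarith [hpos s hs]))).div_const (θ + 1)).congr_deriv ?_
    rw [add_sub_cancel_right]
    field_simp
  have hcont := (continuousOn_inv_mul_log_rpow θ).mono hpos
  rw [integral_eq_sub_of_hasDerivAt hderiv hcont.intervalIntegrable, sub_div]

theorem eventually_le_log_half_rpow_sub {p : ℝ} (hp : 0 < p) (B : ℝ) :
    ∀ᶠ r in atTop, (1 / 2) ^ p / 2 * log r ^ p ≤ log (r / 2) ^ p - B := by
  have htend : Tendsto (fun r => (1 / 2) ^ p / 2 * log r ^ p) atTop atTop :=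
    ((tendsto_rpow_atTop hp).comp tendsto_log_atTop).const_mul_atTop (by positivity)
  filter_upwards [htend.eventually_ge_atTop B, eventually_ge_atTop 4] with r hB hr
  have hlog : log r / 2 ≤ log (r / 2) := by
    have : 2 * log 2 ≤ log r := by
      rw [← Real.log_rpow two_pos]; exact Real.log_le_log (by norm_num) (by norm_num; linarith)
    rw [Real.log_div (by linarith) two_ne_zero]; linarith
  have : (1 / 2) ^ p * log r ^ p ≤ log (r / 2) ^ p := by
    rw [← Real.mul_rpow (by norm_num) (Real.log_nonneg (by linarith))]
    exact Real.rpow_le_rpow (by have := Real.log_nonneg (by linarith : (1:ℝ) ≤ r); positivity)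
      (by linarith) hp.le
  linarith

/-- The radial potential `(1/(N-2)) ∫_ρ^r s w(s) (1 - (s/r)^(N-2)) F(s) ds`, i.e. the solution of
`φ'' + (N-1)/r φ' = w F` on `[ρ, ∞)` with `φ(ρ) = φ'(ρ) = 0`. -/
noncomputable def radialPotential (N : ℕ) (ρ : ℝ) (w F : ℝ → ℝ) (r : ℝ) : ℝ :=
  (1 / ((N : ℝ) - 2)) * ∫ s in ρ..r, s * w s * (1 - (s / r) ^ (N - 2)) * F s

section RadialPotential

variable {N : ℕ} {ρ : ℝ} {w F : ℝ → ℝ}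

theorem continuousOn_radialPotential (hρ : 0 < ρ) (hw : ContinuousOn w (Ici ρ))
    (hF : ContinuousOn F (Ici ρ)) : ContinuousOn (radialPotential N ρ w F) (Ici ρ) := by
  set G := fun s => s * w s * F s
  have hG : ContinuousOn G (Ici ρ) := (continuousOn_id.mul hw).mul hF
  have hGn : ContinuousOn (fun s => G s * s ^ (N - 2)) (Ici ρ) := hG.mul (continuousOn_pow _)
  -- the kernel splits as `1 - s^(N-2) / r^(N-2)`, leaving two primitives
  have hsplit : EqOn (radialPotential N ρ w F) (fun r => (1 / ((N : ℝ) - 2)) *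
      ((∫ s in ρ..r, G s) - (∫ s in ρ..r, G s * s ^ (N - 2)) * (r ^ (N - 2))⁻¹)) (Ici ρ) := by
    intro r (hr : ρ ≤ r)
    have hsub : uIcc ρ r ⊆ Ici ρ := uIcc_of_le hr ▸ Icc_subset_Ici_self
    beta_reduce
    rw [radialPotential, ← intervalIntegral.integral_mul_const,
      ← integral_sub (hG.mono hsub).intervalIntegrable
        ((hGn.mono hsub).intervalIntegrable.mul_const _)]
    congr 1
    refine integral_congr fun s _ => ?_
    have : r ≠ 0 := by linarith
    simp only [G, div_pow]
    field_simp
  refine ContinuousOn.congr ?_ hsplit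
  exact continuousOn_const.mul ((continuousOn_primitive_Ici hG).sub
    ((continuousOn_primitive_Ici hGn).mul ((continuousOn_pow _).inv₀
      fun r (hr : ρ ≤ r) => pow_ne_zero _ (by linarith))))

theorem radialPotential_integrand_nonneg (hρ : 0 ≤ ρ) (hw : ∀ s ∈ Ici ρ, 0 ≤ w s)
    (hF : ∀ s ∈ Ici ρ, 0 ≤ F s) {r s : ℝ} (hs : s ∈ Icc ρ r) :
    0 ≤ s * w s * (1 - (s / r) ^ (N - 2)) * F s :=
  have hs0 : 0 ≤ s := hρ.trans hs.1
  mul_nonneg (mul_nonneg (mul_nonneg hs0 (hw s hs.1)) (one_sub_div_pow_nonneg hs0 hs.2 _))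
    (hF s hs.1)

theorem radialPotential_nonneg (hN : 2 ≤ N) (hρ : 0 ≤ ρ) (hw : ∀ s ∈ Ici ρ, 0 ≤ w s)
    (hF : ∀ s ∈ Ici ρ, 0 ≤ F s) {r : ℝ} (hr : ρ ≤ r) : 0 ≤ radialPotential N ρ w F r := by
  have hN' : (2 : ℝ) ≤ N := by exact_mod_cast hN
  exact mul_nonneg (one_div_nonneg.mpr (by linarith))
    (integral_nonneg hr fun s hs => radialPotential_integrand_nonneg hρ hw hF hs)

/-- On `[b, r/2]` the kernel `1 - (s/r)^(N-2)` is at least `1/2`. -/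
theorem integral_le_radialPotential (hN : 3 ≤ N) (hρ : 0 < ρ) (hw : ContinuousOn w (Ici ρ))
    (hw0 : ∀ s ∈ Ici ρ, 0 ≤ w s) (hF : ContinuousOn F (Ici ρ)) (hF0 : ∀ s ∈ Ici ρ, 0 ≤ F s)
    {b r : ℝ} (hb : ρ ≤ b) (hbr : 2 * b ≤ r) {g : ℝ → ℝ}
    (hg : IntervalIntegrable g volume b (r / 2))
    (hgF : ∀ s ∈ Icc b (r / 2), g s ≤ s * w s * F s / 2) :
    (1 / ((N : ℝ) - 2)) * ∫ s in b..r / 2, g s ≤ radialPotential N ρ w F r := by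
  have hN' : (3 : ℝ) ≤ N := by exact_mod_cast hN
  have hρr : ρ ≤ r := by linarith
  have hH : ContinuousOn (fun s => s * w s * (1 - (s / r) ^ (N - 2)) * F s) (Ici ρ) :=
    ((continuousOn_id.mul hw).mul
      (continuousOn_const.sub ((continuousOn_id.div_const r).pow _))).mul hF
  refine mul_le_mul_of_nonneg_left ((integral_mono_on (by linarith) hg ?_ fun s hs => ?_).trans
    (integral_mono_interval hb (by linarith) (by linarith) ?_ ?_))
    (one_div_nonneg.mpr (by linarith))
  · exact (hH.mono ((uIcc_of_le (by linarith : b ≤ r / 2) ▸ Icc_subset_Ici_self).trans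
      (Ici_subset_Ici.mpr hb))).intervalIntegrable
  · have hs0 : 0 < s := by linarith [hs.1]
    have hk := half_le_one_sub_div_pow (r := r) hs0 (by linarith [hs.2]) (by omega : N - 2 ≠ 0)
    have hwF : 0 ≤ s * w s * F s := mul_nonneg (mul_nonneg hs0.le (hw0 s (hb.trans hs.1)))
      (hF0 s (hb.trans hs.1))
    nlinarith [hgF s hs]
  · exact ae_restrict_of_forall_mem measurableSet_Ioc fun s hs =>
      radialPotential_integrand_nonneg hρ.le hw0 hF0 (Ioc_subset_Icc_self hs)
  · exact (hH.mono (uIcc_of_le hρr ▸ Icc_subset_Ici_self)).intervalIntegrable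

end RadialPotential

noncomputable def criticalWeight (L σ s : ℝ) : ℝ := L * s ^ (-2 : ℝ) * log s ^ (-σ)

theorem continuousOn_criticalWeight (L σ : ℝ) {ρ : ℝ} (hρ : 1 < ρ) :
    ContinuousOn (criticalWeight L σ) (Ici ρ) := by
  have hne : ∀ s ∈ Ici ρ, s ≠ 0 := fun s (hs : ρ ≤ s) => (by linarith : (0 : ℝ) < s).ne'
  exact (continuousOn_const.mul (continuousOn_id.rpow_const fun s hs => Or.inl (hne s hs))).mul
    ((continuousOn_id.log hne).rpow_const
      fun s (hs : ρ ≤ s) => Or.inl (Real.log_pos (hρ.trans_le hs)).ne')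

theorem criticalWeight_nonneg {L : ℝ} (hL : 0 ≤ L) (σ : ℝ) {s : ℝ} (hs : 1 ≤ s) :
    0 ≤ criticalWeight L σ s := by
  have := Real.log_nonneg hs
  unfold criticalWeight
  positivity

theorem mul_criticalWeight {L σ s : ℝ} (hs : 1 < s) (a : ℝ) :
    s * criticalWeight L σ s * log s ^ a = L * (s⁻¹ * log s ^ (a - σ)) := by
  have hs0 : 0 < s := by linarith
  rw [criticalWeight, sub_eq_add_neg, Real.rpow_add (Real.log_pos hs), ← Real.rpow_neg_one,
    show (-1 : ℝ) = 1 + -2 by norm_num, Real.rpow_add hs0, Real.rpow_one]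
  ring

theorem exists_log_rpow_le_radialPotential {N : ℕ} (hN : 3 ≤ N) {ρ L σ : ℝ} (hρ : 1 < ρ)
    (hL : 0 < L) {F : ℝ → ℝ} (hF : ContinuousOn F (Ici ρ)) (hF0 : ∀ s ∈ Ici ρ, 0 ≤ F s)
    {c a : ℝ} (hc : 0 < c) (hσ : -1 < a - σ) (hlow : ∀ᶠ s in atTop, c * log s ^ a ≤ F s) :
    ∃ C > 0, ∀ᶠ r in atTop,
      C * log r ^ (a + 1 - σ) ≤ radialPotential N ρ (criticalWeight L σ) F r := by
  have hN' : (3 : ℝ) ≤ N := by exact_mod_cast hN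
  have hκ : 0 < 1 / ((N : ℝ) - 2) := one_div_pos.mpr (by linarith)
  obtain ⟨b₀, hb₀⟩ := hlow.exists_forall_of_atTop
  set b := max b₀ ρ
  have hb1 : 1 < b := hρ.trans_le (le_max_right _ _)
  set p := a - σ + 1
  have hp : 0 < p := by linarith
  refine ⟨1 / ((N : ℝ) - 2) * (L * c / 2 / p) * ((1 / 2) ^ p / 2), by positivity, ?_⟩
  filter_upwards [eventually_le_log_half_rpow_sub hp (log b ^ p), eventually_ge_atTop (2 * b)]
    with r hlog hr
  have hbr : b ≤ r / 2 := by linarith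
  have hpt : ∀ s ∈ Icc b (r / 2), L * c / 2 * (s⁻¹ * log s ^ (a - σ))
      ≤ s * criticalWeight L σ s * F s / 2 := by
    intro s ⟨hbs, _⟩
    have hs1 : 1 < s := hb1.trans_le hbs
    have hw := criticalWeight_nonneg hL.le σ hs1.le
    have hF := mul_le_mul_of_nonneg_left (hb₀ s ((le_max_left _ _).trans hbs))
      (mul_nonneg (by linarith : (0 : ℝ) ≤ s) hw)
    linear_combination (1 / 2) * hF - (c / 2) * mul_criticalWeight (L := L) (σ := σ) hs1 a
  have hint :
      IntervalIntegrable (fun s => L * c / 2 * (s⁻¹ * log s ^ (a - σ))) volume b (r / 2) :=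
    (((continuousOn_inv_mul_log_rpow _).mono fun s hs =>
      hb1.trans_le (uIcc_of_le hbr ▸ hs).1).intervalIntegrable).const_mul _
  calc 1 / ((N : ℝ) - 2) * (L * c / 2 / p) * ((1 / 2) ^ p / 2) * log r ^ (a + 1 - σ)
      ≤ 1 / ((N : ℝ) - 2) * (L * c / 2 / p * (log (r / 2) ^ p - log b ^ p)) := by
        rw [show a + 1 - σ = p by ring, mul_assoc, mul_assoc]
        exact mul_le_mul_of_nonneg_left (mul_le_mul_of_nonneg_left hlog (by positivity)) hκ.le
    _ = 1 / ((N : ℝ) - 2) * ∫ s in b..r / 2, L * c / 2 * (s⁻¹ * log s ^ (a - σ)) := by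
        rw [intervalIntegral.integral_const_mul, integral_inv_mul_log_rpow hb1 hbr hp.ne']
        ring
    _ ≤ radialPotential N ρ (criticalWeight L σ) F r :=
        integral_le_radialPotential hN (by linarith) (continuousOn_criticalWeight L σ hρ)
          (fun s (hs : ρ ≤ s) => criticalWeight_nonneg hL.le σ (by linarith)) hF hF0
          (le_max_right _ _) hr hint hpt

theorem eventually_rpow_mul_log_rpow_le {f : ℝ → ℝ} {c a γ : ℝ} (hc : 0 < c) (hγ : 0 ≤ γ)
    (h : ∀ᶠ s in atTop, c * log s ^ a ≤ f s) :
    ∀ᶠ s in atTop, c ^ γ * log s ^ (a * γ) ≤ f s ^ γ := by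
  filter_upwards [h, eventually_gt_atTop 1] with s hs hs1
  have hl := Real.log_pos hs1
  calc c ^ γ * log s ^ (a * γ) = (c * log s ^ a) ^ γ := by
        rw [Real.mul_rpow hc.le (Real.rpow_nonneg hl.le _), Real.rpow_mul hl.le]
    _ ≤ f s ^ γ := Real.rpow_le_rpow (by positivity) hs hγ

structure LogPowLowerBound (ρ a : ℝ) (f : ℝ → ℝ) : Prop where
  continuousOn : ContinuousOn f (Ici ρ)
  nonneg : ∀ s ∈ Ici ρ, 0 ≤ f s
  eventually_ge : ∃ c > 0, ∀ᶠ r in atTop, c * log r ^ a ≤ f r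

theorem LogPowLowerBound.radialPotential_rpow {N : ℕ} (hN : 3 ≤ N) {ρ L σ a γ : ℝ} {f : ℝ → ℝ}
    (hf : LogPowLowerBound ρ a f) (hρ : 1 < ρ) (hL : 0 < L) (hγ : 0 ≤ γ) (haγ : -1 < a * γ - σ) :
    LogPowLowerBound ρ (a * γ + 1 - σ)
      (radialPotential N ρ (criticalWeight L σ) fun s => f s ^ γ) := by
  have hF : ContinuousOn (fun s => f s ^ γ) (Ici ρ) :=
    hf.continuousOn.rpow_const fun _ _ => Or.inr hγ
  have hF0 : ∀ s ∈ Ici ρ, 0 ≤ f s ^ γ := fun s hs => Real.rpow_nonneg (hf.nonneg s hs) γ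
  have hw0 : ∀ s ∈ Ici ρ, 0 ≤ criticalWeight L σ s := fun s (hs : ρ ≤ s) =>
    criticalWeight_nonneg hL.le σ (by linarith)
  obtain ⟨c, hc, hlow⟩ := hf.eventually_ge
  exact ⟨continuousOn_radialPotential (by linarith) (continuousOn_criticalWeight L σ hρ) hF,
    fun r hr => radialPotential_nonneg (by omega) (by linarith) hw0 hF0 hr,
    exists_log_rpow_le_radialPotential hN hρ hL hF hF0 (Real.rpow_pos_of_pos hc γ) haγ
      (eventually_rpow_mul_log_rpow_le hc hγ hlow)⟩

theorem mul_geom_div_add {x D : ℝ} (hx : x ≠ 1) (k : ℕ) :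
    (x ^ k - 1) * D / (x - 1) * x + D = (x ^ (k + 1) - 1) * D / (x - 1) := by
  have : x - 1 ≠ 0 := sub_ne_zero.mpr hx
  field_simp
  ring

theorem stmt_19_general (N : ℕ) (hN : 3 ≤ N) (α β : ℝ) (hα : 1 ≤ α) (hβ : 1 ≤ β) (hαβ : 1 < α * β)
    (ν ξ : ℝ) (hν : ν < 1) (hcond : 1 - ξ + β * (1 - ν) > 0)
    (ρ L₁ L₂ : ℝ) (hρ : 1 < ρ) (hL₁ : 0 < L₁) (hL₂ : 0 < L₂)
    (u v : ℕ → ℝ → ℝ)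
    (hv0 : ∀ r, v 0 r = 1)
    (huk : ∀ k, ∀ r, u (k + 1) r =
      (1 / ((N : ℝ) - 2)) * ∫ s in ρ..r,
        s * (L₁ * s ^ (-2 : ℝ) * Real.log s ^ (-ν)) * (1 - (s / r) ^ (N - 2)) * v k s ^ α)
    (hvk : ∀ k, ∀ r, v (k + 1) r =
      (1 / ((N : ℝ) - 2)) * ∫ s in ρ..r,
        s * (L₂ * s ^ (-2 : ℝ) * Real.log s ^ (-ξ)) * (1 - (s / r) ^ (N - 2)) * u k s ^ β) :
    ∀ k : ℕ, ∃ C > (0 : ℝ), ∃ rk > ρ, ∀ r > rk,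
      v (2 * k) r ≥
        C * Real.log r ^ ((α ^ k * β ^ k - 1) * (1 - ξ + β * (1 - ν)) / (α * β - 1)) := by
  set e : ℕ → ℝ := fun k => (α ^ k * β ^ k - 1) * (1 - ξ + β * (1 - ν)) / (α * β - 1)
  have he : ∀ k, 0 ≤ e k := fun k => div_nonneg (mul_nonneg (by
    rw [← mul_pow, sub_nonneg]; exact one_le_pow₀ hαβ.le) hcond.le) (by linarith)
  have hv : ∀ k, LogPowLowerBound ρ (e k) (v (2 * k)) := by
    intro k
    induction k with
    | zero =>
      rw [show e 0 = 0 by simp [e], Nat.mul_zero, show v 0 = fun _ => 1 from funext hv0]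
      exact ⟨continuousOn_const, fun _ _ => zero_le_one, 1, one_pos, by simp⟩
    | succ k ih =>
      have hu : LogPowLowerBound ρ (e k * α + 1 - ν) (u (2 * k + 1)) := by
        rw [funext (huk (2 * k))]
        exact ih.radialPotential_rpow hN hρ hL₁ (by linarith) (by nlinarith [he k])
      have hv' : LogPowLowerBound ρ ((e k * α + 1 - ν) * β + 1 - ξ) (v (2 * k + 1 + 1)) := by
        rw [funext (hvk (2 * k + 1))]
        exact hu.radialPotential_rpow hN hρ hL₂ (by linarith) (by nlinarith [he k])
      rwa [show (e k * α + 1 - ν) * β + 1 - ξ = e (k + 1) by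
        simp only [e, ← mul_pow]; rw [← mul_geom_div_add hαβ.ne']; ring] at hv'
  intro k
  obtain ⟨C, hC, hev⟩ := (hv k).eventually_ge
  obtain ⟨M, hM⟩ := hev.exists_forall_of_atTop
  exact ⟨C, hC, max M ρ + 1, by linarith [le_max_right M ρ], fun r hr =>
    hM r (by linarith [le_max_left M ρ])⟩

theorem stmt_19 (N : ℕ) (hN : 3 ≤ N) (α β : ℝ) (hα : 1 ≤ α) (hβ : 1 ≤ β) (hαβ : 1 < α * β)
    (ν ξ : ℝ) (hν : ν < 1) (hcond : 1 - ξ + β * (1 - ν) > 0)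
    (ρ L₁ L₂ : ℝ) (hρ : 1 < ρ) (hL₁ : 0 < L₁) (hL₂ : 0 < L₂)
    (u v : ℕ → ℝ → ℝ)
    (hu0 : ∀ r, u 0 r = 1) (hv0 : ∀ r, v 0 r = 1)
    (huk : ∀ k, ∀ r, u (k + 1) r =
      (1 / ((N : ℝ) - 2)) * ∫ s in ρ..r,
        s * (L₁ * s ^ (-2 : ℝ) * Real.log s ^ (-ν)) * (1 - (s / r) ^ (N - 2)) * v k s ^ α)
    (hvk : ∀ k, ∀ r, v (k + 1) r =
      (1 / ((N : ℝ) - 2)) * ∫ s in ρ..r,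
        s * (L₂ * s ^ (-2 : ℝ) * Real.log s ^ (-ξ)) * (1 - (s / r) ^ (N - 2)) * u k s ^ β) :
    ∀ k : ℕ, ∃ C > (0 : ℝ), ∃ rk > ρ, ∀ r > rk,
      v (2 * k) r ≥
        C * Real.log r ^ ((α ^ k * β ^ k - 1) * (1 - ξ + β * (1 - ν)) / (α * β - 1)) :=
  stmt_19_general N hN α β hα hβ hαβ ν ξ hν hcond ρ L₁ L₂ hρ hL₁ hL₂ u v hv0 huk hvk
end
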